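/- arXiv:gr-qc/0408068 — 9 statements merged into one kernel-verified Lean document; each statement's English description precedes it below -/
import Mathlib

section
/- The upper space UX of a locally compact Hausdorff space X is a continuous dcpo. -/
/-- `x` is way below `y`. -/
def wayBelow {P : Type*} [Preorder P] (x y : P) : Prop :=
  ∀ S : Set P, S.Nonempty → DirectedOn (· ≤ ·) S → ∀ s : P, IsLUB S s → y ≤ s →
    ∃ z ∈ S, x ≤ z

/-- A poset is a dcpo if every nonempty directed subset has a supremum. -/
def IsDcpo (P : Type*) [Preorder P] : Prop :=
  ∀ S : Set P, S.Nonempty → DirectedOn (· ≤ ·) S → ∃ s : P, IsLUB S s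

/-- `B` is a (domain-theoretic) basis for `P`. -/
def IsDomainBasis {P : Type*} [Preorder P] (B : Set P) : Prop :=
  ∀ x : P, ∃ S : Set P, S ⊆ B ∧ S.Nonempty ∧ DirectedOn (· ≤ ·) S ∧
    (∀ a ∈ S, wayBelow a x) ∧ IsLUB S x

/-- A poset is continuous if it has a basis (equivalently, the whole poset is a basis). -/
def IsContinuousPoset (P : Type*) [Preorder P] : Prop :=
  IsDomainBasis (Set.univ : Set P)

/-- The Scott topology on a poset. -/
def scottTop (P : Type*) [Preorder P] : TopologicalSpace P where
  IsOpen U := (∀ x ∈ U, ∀ y, x ≤ y → y ∈ U) ∧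
    ∀ S : Set P, S.Nonempty → DirectedOn (· ≤ ·) S → ∀ s : P, IsLUB S s → s ∈ U →
      (S ∩ U).Nonempty
  isOpen_univ := ⟨fun _ _ _ _ => trivial,
    fun S hS _ _ _ _ => hS.imp fun x hx => ⟨hx, trivial⟩⟩
  isOpen_inter := by
    rintro U V ⟨hUup, hUin⟩ ⟨hVup, hVin⟩
    refine ⟨fun x hx y hxy => ⟨hUup x hx.1 y hxy, hVup x hx.2 y hxy⟩, ?_⟩
    rintro S hS hdir s hs ⟨hsU, hsV⟩
    obtain ⟨a, haS, haU⟩ := hUin S hS hdir s hs hsU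
    obtain ⟨b, hbS, hbV⟩ := hVin S hS hdir s hs hsV
    obtain ⟨c, hcS, hac, hbc⟩ := hdir a haS b hbS
    exact ⟨c, hcS, hUup a haU c hac, hVup b hbV c hbc⟩
  isOpen_sUnion := by
    intro C hC
    refine ⟨fun x hx y hxy => ?_, ?_⟩
    · obtain ⟨t, htC, hxt⟩ := hx
      exact ⟨t, htC, (hC t htC).1 x hxt y hxy⟩
    · rintro S hS hdir s hs ⟨t, htC, hst⟩
      obtain ⟨a, haS, hat⟩ := (hC t htC).2 S hS hdir s hs hst
      exact ⟨a, haS, t, htC, hat⟩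

/-- A continuous poset is bicontinuous if the way-below relation admits the dual
characterization via filtered infima and each `↟x` is filtered with infimum `x`. -/
def IsBicontinuous (P : Type*) [Preorder P] : Prop :=
  IsContinuousPoset P ∧
  (∀ x y : P, wayBelow x y ↔
    ∀ S : Set P, S.Nonempty → DirectedOn (· ≥ ·) S → ∀ i : P, IsGLB S i → i ≤ x →
      ∃ s ∈ S, s ≤ y) ∧
  (∀ x : P, {a | wayBelow x a}.Nonempty ∧ DirectedOn (· ≥ ·) {a | wayBelow x a} ∧
    IsGLB {a | wayBelow x a} x)

/-- The interval topology on a bicontinuous poset, with basic open sets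
`(a,b) = {x | a ≪ x ≪ b}`. -/
def intervalTop (P : Type*) [Preorder P] : TopologicalSpace P :=
  .generateFrom {s | ∃ a b : P, s = {x | wayBelow a x ∧ wayBelow x b}}

/-- A globally hyperbolic poset: bicontinuous, with all closed intervals compact
in the interval topology. -/
def IsGloballyHyperbolic (P : Type*) [PartialOrder P] : Prop :=
  IsBicontinuous P ∧ ∀ a b : P, a ≤ b → @IsCompact P (intervalTop P) (Set.Icc a b)

/-- The upper space of a topological space: nonempty compact subsets under
reverse inclusion. -/
structure UpperSpace (X : Type*) [TopologicalSpace X] where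
  carrier : Set X
  nonempty' : carrier.Nonempty
  compact' : IsCompact carrier

/-- Reverse inclusion order on the upper space. -/
instance (X : Type*) [TopologicalSpace X] : PartialOrder (UpperSpace X) where
  le A B := B.carrier ⊆ A.carrier
  le_refl A := subset_rfl
  le_trans A B C h1 h2 := Set.Subset.trans h2 h1
  le_antisymm A B h1 h2 := by
    cases A; cases B
    simp only [UpperSpace.mk.injEq]
    exact subset_antisymm h2 h1

lemma upperSpace_le_iff {X : Type*} [TopologicalSpace X] (A B : UpperSpace X) :
    A ≤ B ↔ B.carrier ⊆ A.carrier := Iff.rfl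

lemma upperSpace_lub {X : Type*} [TopologicalSpace X] [T2Space X]
    (S : Set (UpperSpace X)) (hne : S.Nonempty) (hdir : DirectedOn (· ≤ ·) S) :
    ∃ s : UpperSpace X, s.carrier = ⋂ A ∈ S, A.carrier ∧ IsLUB S s := by
  obtain ⟨A₀, hA₀⟩ := hne
  have : Nonempty ↥S := ⟨⟨A₀, hA₀⟩⟩
  have hdir' : Directed (· ⊇ ·) (fun A : ↥S => (A : UpperSpace X).carrier) := by
    rintro ⟨a, ha⟩ ⟨b, hb⟩
    obtain ⟨c, hc, hac, hbc⟩ := hdir a ha b hb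
    exact ⟨⟨c, hc⟩, hac, hbc⟩
  have hC : (⋂ A : ↥S, (A : UpperSpace X).carrier).Nonempty :=
    IsCompact.nonempty_iInter_of_directed_nonempty_isCompact_isClosed _ hdir'
      (fun A => (A : UpperSpace X).nonempty') (fun A => (A : UpperSpace X).compact')
      (fun A => (A : UpperSpace X).compact'.isClosed)
  have hEq : (⋂ A : ↥S, (A : UpperSpace X).carrier) = ⋂ A ∈ S, A.carrier := by
    rw [Set.iInter_coe_set]
  have hclosed : IsClosed (⋂ A ∈ S, A.carrier) :=
    isClosed_biInter fun A _ => A.compact'.isClosed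
  have hcomp : IsCompact (⋂ A ∈ S, A.carrier) :=
    A₀.compact'.of_isClosed_subset hclosed (Set.biInter_subset_of_mem hA₀)
  refine ⟨⟨⋂ A ∈ S, A.carrier, hEq ▸ hC, hcomp⟩, rfl, ?_, ?_⟩
  · intro A hA
    exact Set.biInter_subset_of_mem hA
  · intro t ht
    exact Set.subset_iInter₂ fun A hA => ht hA

/-- The upper space of a locally compact Hausdorff space is a continuous dcpo. -/
theorem upperSpace_continuous_dcpo (X : Type*) [TopologicalSpace X]
    [T2Space X] [LocallyCompactSpace X] :
    IsDcpo (UpperSpace X) ∧ IsContinuousPoset (UpperSpace X) := by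
  constructor
  · intro S hne hdir
    obtain ⟨s, _, hs⟩ := upperSpace_lub S hne hdir
    exact ⟨s, hs⟩
  · intro B
    refine ⟨{A : UpperSpace X | B.carrier ⊆ interior A.carrier},
      Set.subset_univ _, ?_, ?_, ?_, ?_, ?_⟩
    · -- nonempty
      obtain ⟨L, hLc, hBL, _⟩ := exists_compact_between B.compact' isOpen_univ
        (Set.subset_univ _)
      exact ⟨⟨L, B.nonempty'.mono (hBL.trans interior_subset), hLc⟩, hBL⟩
    · -- directed
      rintro A₁ hA₁ A₂ hA₂
      obtain ⟨L, hLc, hBL, hLsub⟩ := exists_compact_between B.compact'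
        (isOpen_interior.inter isOpen_interior) (Set.subset_inter hA₁ hA₂)
      refine ⟨⟨L, B.nonempty'.mono (hBL.trans interior_subset), hLc⟩, hBL,
        fun x hx => interior_subset ((hLsub hx).1),
        fun x hx => interior_subset ((hLsub hx).2)⟩
    · -- way below
      rintro A hA D hDne hDdir s hs hBs
      obtain ⟨L, hLcar, hL⟩ := upperSpace_lub D hDne hDdir
      have hsL : s = L := hs.unique hL
      have hsub : (⋂ d ∈ D, d.carrier) ⊆ interior A.carrier := by
        rw [← hLcar, ← hsL]
        exact (upperSpace_le_iff B s).mp hBs |>.trans hA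
      by_contra hcon
      push_neg at hcon
      obtain ⟨d₀, hd₀⟩ := hDne
      have : Nonempty ↥D := ⟨⟨d₀, hd₀⟩⟩
      have hKne : (⋂ d : ↥D, ((d : UpperSpace X).carrier \ interior A.carrier)).Nonempty := by
        apply IsCompact.nonempty_iInter_of_directed_nonempty_isCompact_isClosed
        · rintro ⟨a, ha⟩ ⟨b, hb⟩
          obtain ⟨c, hc, hac, hbc⟩ := hDdir a ha b hb
          exact ⟨⟨c, hc⟩, fun x hx => ⟨hac hx.1, hx.2⟩, fun x hx => ⟨hbc hx.1, hx.2⟩⟩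
        · rintro ⟨d, hd⟩
          rw [Set.diff_nonempty]
          intro hsubd
          exact hcon d hd (hsubd.trans interior_subset)
        · exact fun d => (d : UpperSpace X).compact'.of_isClosed_subset
            ((d : UpperSpace X).compact'.isClosed.sdiff isOpen_interior)
            Set.diff_subset
        · exact fun d => (d : UpperSpace X).compact'.isClosed.sdiff isOpen_interior
      obtain ⟨x, hx⟩ := hKne
      simp only [Set.mem_iInter, Set.mem_diff] at hx
      exact (hx ⟨d₀, hd₀⟩).2 (hsub (Set.mem_iInter₂.mpr fun d hd => (hx ⟨d, hd⟩).1))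
    · -- upper bound
      intro A hA
      exact fun x hx => interior_subset (hA hx)
    · -- least
      intro t ht x hxt
      by_contra hxB
      obtain ⟨L, hLc, hBL, hLsub⟩ := exists_compact_between B.compact'
        (isOpen_compl_singleton (x := x)) (fun y hy hxy => hxB (hxy ▸ hy))
      have hLS : (⟨L, B.nonempty'.mono (hBL.trans interior_subset), hLc⟩ : UpperSpace X)
          ∈ {A : UpperSpace X | B.carrier ⊆ interior A.carrier} := hBL
      exact hLsub (ht hLS hxt) rfl
end

section
/- For a locally compact Hausdorff space X, the map x ↦ {x} is a homeomorphism from X onto the set of maximal elements of the upper space UX equipped with the relative Scott topology. -/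
instance (X : Type*) [TopologicalSpace X] : TopologicalSpace (UpperSpace X) :=
  scottTop (UpperSpace X)


/-!
In a Hausdorff space the supremum of a directed family of nonempty compact sets is their
intersection, and a directed family of compact sets whose intersection lies in an open set `V`
already has a member inside `V`; hence `{K | K ⊆ V}` is Scott open, which makes `x ↦ {x}` an
open map onto the maximal elements. Conversely, by local compactness `{x}` is the directed
supremum of the compact neighbourhoods of `x`, so a Scott open set containing `{x}` contains one
of them, `K`, and then `{y}` for every `y` in the interior of `K`: the map is continuous.
-/

open Topology

namespace UpperSpace

variable {X : Type*} [TopologicalSpace X]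

def singleton (x : X) : UpperSpace X :=
  ⟨{x}, Set.singleton_nonempty x, isCompact_singleton⟩

@[simp]
lemma carrier_singleton (x : X) : (singleton x).carrier = {x} := rfl

lemma le_singleton_iff {K : UpperSpace X} {x : X} : K ≤ singleton x ↔ x ∈ K.carrier :=
  Set.singleton_subset_iff

lemma singleton_injective : Function.Injective (singleton : X → UpperSpace X) :=
  fun _ _ h => Set.singleton_injective (congrArg carrier h)

lemma isMax_iff {K : UpperSpace X} : IsMax K ↔ ∃ x, singleton x = K := by
  constructor
  · intro hK
    obtain ⟨x, hx⟩ := K.nonempty'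
    exact ⟨x, le_antisymm (hK (le_singleton_iff.2 hx)) (le_singleton_iff.2 hx)⟩
  · rintro ⟨x, rfl⟩ L hL
    obtain ⟨z, hz⟩ := L.nonempty'
    obtain rfl : z = x := hL hz
    exact le_singleton_iff.2 hz

lemma isMax_singleton (x : X) : IsMax (singleton x) := isMax_iff.2 ⟨x, rfl⟩

lemma iInter_carrier_subset_of_isLUB [T2Space X] {S : Set (UpperSpace X)} (hne : S.Nonempty)
    (hS : DirectedOn (· ≤ ·) S) {s : UpperSpace X} (hs : IsLUB S s) :
    ⋂ K : S, K.1.carrier ⊆ s.carrier := by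
  obtain ⟨K₀, hK₀⟩ := hne
  have : Nonempty S := ⟨⟨K₀, hK₀⟩⟩
  let T : UpperSpace X :=
    ⟨⋂ K : S, K.1.carrier,
      IsCompact.nonempty_iInter_of_directed_nonempty_isCompact_isClosed _ hS.directed_val
        (fun K => K.1.nonempty') (fun K => K.1.compact') (fun K => K.1.compact'.isClosed),
      K₀.compact'.of_isClosed_subset (isClosed_iInter fun K => K.1.compact'.isClosed)
        (Set.iInter_subset (fun K : S => K.1.carrier) ⟨K₀, hK₀⟩)⟩
  exact hs.2 (show T ∈ upperBounds S from
    fun K hK => Set.iInter_subset (fun K : S => K.1.carrier) ⟨K, hK⟩)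

lemma isOpen_setOf_carrier_subset [T2Space X] {V : Set X} (hV : IsOpen V) :
    IsOpen {K : UpperSpace X | K.carrier ⊆ V} := by
  refine ⟨fun K hK L hKL => Set.Subset.trans hKL hK, ?_⟩
  rintro S hne hS s hs hsV
  have : Nonempty S := hne.to_subtype
  obtain ⟨K, hK⟩ := exists_subset_nhds_of_isCompact hS.directed_val (fun K => K.1.compact')
    fun x hx => hV.mem_nhds (hsV (iInter_carrier_subset_of_isLUB hne hS hs hx))
  exact ⟨K.1, K.2, hK⟩

lemma exists_carrier_mem_nhds_subset [LocallyCompactSpace X] {x : X} {n : Set X}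
    (hn : n ∈ 𝓝 x) : ∃ K : UpperSpace X, K.carrier ∈ 𝓝 x ∧ K.carrier ⊆ n := by
  obtain ⟨s, hs, hsn, hsc⟩ := local_compact_nhds hn
  exact ⟨⟨s, ⟨x, mem_of_mem_nhds hs⟩, hsc⟩, hs, hsn⟩

lemma directedOn_carrier_mem_nhds [LocallyCompactSpace X] (x : X) :
    DirectedOn (· ≤ ·) {K : UpperSpace X | K.carrier ∈ 𝓝 x} := by
  intro K₁ h₁ K₂ h₂
  obtain ⟨K, hK, hK₁₂⟩ := exists_carrier_mem_nhds_subset (Filter.inter_mem h₁ h₂)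
  exact ⟨K, hK, fun _ hy => (hK₁₂ hy).1, fun _ hy => (hK₁₂ hy).2⟩

lemma isLUB_carrier_mem_nhds [T1Space X] [LocallyCompactSpace X] (x : X) :
    IsLUB {K : UpperSpace X | K.carrier ∈ 𝓝 x} (singleton x) := by
  refine ⟨fun K hK => le_singleton_iff.2 (mem_of_mem_nhds hK), fun T hT y hy => ?_⟩
  by_contra hyx
  obtain ⟨K, hK, hKy⟩ :=
    exists_carrier_mem_nhds_subset (isOpen_compl_singleton.mem_nhds (Ne.symm hyx))
  exact hKy (hT hK hy) rfl

lemma continuous_singleton [T1Space X] [LocallyCompactSpace X] :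
    Continuous (singleton : X → UpperSpace X) := by
  refine continuous_def.2 fun U ⟨hUup, hUin⟩ => isOpen_iff_forall_mem_open.2 fun x hx => ?_
  obtain ⟨K, hK, hKU⟩ := hUin _
    ((exists_carrier_mem_nhds_subset (x := x) Filter.univ_mem).imp fun _ h => h.1)
    (directedOn_carrier_mem_nhds x) _ (isLUB_carrier_mem_nhds x) hx
  exact ⟨interior K.carrier, fun y hy => hUup K hKU _ (le_singleton_iff.2 (interior_subset hy)),
    isOpen_interior, mem_interior_iff_mem_nhds.2 hK⟩

end UpperSpace

/-- For a locally compact Hausdorff space `X`, the map `x ↦ {x}` is a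
homeomorphism of `X` onto the maximal elements of the upper space with the
relative Scott topology. -/
theorem upperSpace_max_homeomorph (X : Type*) [TopologicalSpace X]
    [T2Space X] [LocallyCompactSpace X] :
    ∃ h : X ≃ₜ {K : UpperSpace X // IsMax K}, ∀ x : X, (h x).1.carrier = {x} := by
  let f : X → {K : UpperSpace X // IsMax K} := fun x =>
    ⟨.singleton x, UpperSpace.isMax_singleton x⟩
  have hf : Function.Bijective f :=
    ⟨fun _ _ h => UpperSpace.singleton_injective (congrArg Subtype.val h),
      fun K => (UpperSpace.isMax_iff.1 K.2).imp fun _ hx => Subtype.ext hx⟩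
  have hopen : IsOpenMap f := fun V hV => by
    have himage : f '' V = Subtype.val ⁻¹' {K : UpperSpace X | K.carrier ⊆ V} := by
      ext ⟨K, hK⟩
      obtain ⟨x, rfl⟩ := UpperSpace.isMax_iff.1 hK
      simp only [Set.mem_preimage, Set.mem_ofPred_eq, UpperSpace.carrier_singleton,
        Set.singleton_subset_iff]
      exact hf.1.mem_set_image
    rw [himage]
    exact (UpperSpace.isOpen_setOf_carrier_subset hV).preimage continuous_subtype_val
  exact ⟨(Equiv.ofBijective f hf).toHomeomorphOfContinuousOpen
    (UpperSpace.continuous_singleton.subtype_mk _) hopen, fun _ => rfl⟩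
end

section
/- The set of maximal elements of the interval domain IR with its relative Scott topology is homeomorphic to ℝ with the Euclidean topology, via x ↦ [x,x]. -/
/-- The interval domain: compact intervals of the real line. -/
structure IntervalDomain where
  carrier : Set ℝ
  isIcc : ∃ a b : ℝ, a ≤ b ∧ carrier = Set.Icc a b

/-- Reverse inclusion order on the interval domain. -/
instance : PartialOrder IntervalDomain where
  le I J := J.carrier ⊆ I.carrier
  le_refl I := subset_rfl
  le_trans I J K h1 h2 := Set.Subset.trans h2 h1
  le_antisymm I J h1 h2 := by
    cases I; cases J
    simp only [IntervalDomain.mk.injEq]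
    exact subset_antisymm h2 h1

instance : TopologicalSpace IntervalDomain := scottTop IntervalDomain

namespace IDAux

open Set

noncomputable def lo (I : IntervalDomain) : ℝ := sInf I.carrier
noncomputable def hi (I : IntervalDomain) : ℝ := sSup I.carrier

lemma lo_le_hi (I : IntervalDomain) : lo I ≤ hi I := by
  obtain ⟨a, b, hab, h⟩ := I.isIcc
  simp [lo, hi, h, csInf_Icc hab, csSup_Icc hab, hab]

lemma carrier_eq (I : IntervalDomain) : I.carrier = Set.Icc (lo I) (hi I) := by
  obtain ⟨a, b, hab, h⟩ := I.isIcc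
  simp [lo, hi, h, csInf_Icc hab, csSup_Icc hab]

lemma ext' {I J : IntervalDomain} (h : I.carrier = J.carrier) : I = J := by
  cases I; cases J; simpa using h

lemma le_def {I J : IntervalDomain} : I ≤ J ↔ J.carrier ⊆ I.carrier := Iff.rfl

lemma lo_mem (I : IntervalDomain) : lo I ∈ I.carrier := by
  rw [carrier_eq]; exact ⟨le_rfl, lo_le_hi I⟩

lemma hi_mem (I : IntervalDomain) : hi I ∈ I.carrier := by
  rw [carrier_eq]; exact ⟨lo_le_hi I, le_rfl⟩

lemma lo_mono {I J : IntervalDomain} (h : I ≤ J) : lo I ≤ lo J := by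
  have := h (lo_mem J); rw [carrier_eq] at this; exact this.1

lemma hi_mono {I J : IntervalDomain} (h : I ≤ J) : hi J ≤ hi I := by
  have := h (hi_mem J); rw [carrier_eq] at this; exact this.2

/-- The singleton interval `[x,x]`. -/
def pt (x : ℝ) : IntervalDomain := ⟨Set.Icc x x, x, x, le_rfl, rfl⟩

lemma pt_carrier (x : ℝ) : (pt x).carrier = {x} := Set.Icc_self x

lemma lo_pt (x : ℝ) : lo (pt x) = x := by
  simp [lo, pt, csInf_Icc le_rfl]

lemma pt_max (x : ℝ) : IsMax (pt x) := by
  intro J hJ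
  have h1 : lo J ∈ (pt x).carrier := hJ (lo_mem J)
  rw [pt_carrier] at h1
  intro y hy
  rw [pt_carrier] at hy
  rw [Set.mem_singleton_iff] at hy h1
  rw [hy, ← h1]; exact lo_mem J

lemma max_lo_eq_hi {I : IntervalDomain} (h : IsMax I) : lo I = hi I := by
  have hle : I ≤ pt (lo I) := by
    rw [le_def, pt_carrier]
    exact Set.singleton_subset_iff.2 (lo_mem I)
  have h2 := h hle
  have := h2 (hi_mem I)
  rw [pt_carrier, Set.mem_singleton_iff] at this
  exact this.symm

lemma max_carrier {I : IntervalDomain} (h : IsMax I) : I.carrier = {lo I} := by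
  rw [carrier_eq, ← max_lo_eq_hi h, Set.Icc_self]

/-- The basic Scott-open sets `{I | I ⊆ (a,b)}`. -/
lemma isOpen_U (a b : ℝ) : IsOpen {I : IntervalDomain | I.carrier ⊆ Set.Ioo a b} := by
  refine ⟨fun I hI J hIJ => Set.Subset.trans hIJ hI, ?_⟩
  rintro S ⟨I₀, hI₀⟩ hdir s hs hsU
  -- cross bound: lo I ≤ hi J for I, J ∈ S
  have cross : ∀ I ∈ S, ∀ J ∈ S, lo I ≤ hi J := by
    intro I hI J hJ
    obtain ⟨K, _, hIK, hJK⟩ := hdir I hI J hJ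
    exact le_trans (lo_mono hIK) (le_trans (lo_le_hi K) (hi_mono hJK))
  set A := sSup (lo '' S) with hA
  set B := sInf (hi '' S) with hB
  have hbddA : BddAbove (lo '' S) := ⟨hi I₀, by rintro _ ⟨I, hI, rfl⟩; exact cross I hI I₀ hI₀⟩
  have hbddB : BddBelow (hi '' S) := ⟨lo I₀, by rintro _ ⟨J, hJ, rfl⟩; exact cross I₀ hI₀ J hJ⟩
  have hSne : (lo '' S).Nonempty := ⟨lo I₀, Set.mem_image_of_mem _ hI₀⟩
  have hSne' : (hi '' S).Nonempty := ⟨hi I₀, Set.mem_image_of_mem _ hI₀⟩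
  have hA_le : ∀ J ∈ S, A ≤ hi J := fun J hJ =>
    csSup_le hSne (by rintro _ ⟨I, hI, rfl⟩; exact cross I hI J hJ)
  have hle_A : ∀ I ∈ S, lo I ≤ A := fun I hI => le_csSup hbddA (Set.mem_image_of_mem _ hI)
  have hB_le : ∀ J ∈ S, B ≤ hi J := fun J hJ => csInf_le hbddB (Set.mem_image_of_mem _ hJ)
  have hAB : A ≤ B := le_csInf hSne' (by rintro _ ⟨J, hJ, rfl⟩; exact hA_le J hJ)
  set T : IntervalDomain := ⟨Set.Icc A B, A, B, hAB, rfl⟩ with hT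
  have hTub : T ∈ upperBounds S := by
    rintro I hI
    rw [le_def]
    show Set.Icc A B ⊆ I.carrier
    rw [carrier_eq]
    exact Set.Icc_subset_Icc (hle_A I hI) (hB_le I hI)
  have hsT : s ≤ T := hs.2 hTub
  have hAs : A ∈ s.carrier := hsT ⟨le_rfl, hAB⟩
  have hBs : B ∈ s.carrier := hsT ⟨hAB, le_rfl⟩
  have haA : a < A := (hsU hAs).1
  have hBb : B < b := (hsU hBs).2
  have hexI : ∃ I ∈ S, a < lo I := by
    by_contra hcon
    push_neg at hcon
    have : A ≤ a := csSup_le hSne (by rintro _ ⟨I, hI, rfl⟩; exact hcon I hI)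
    linarith
  have hexJ : ∃ J ∈ S, hi J < b := by
    by_contra hcon
    push_neg at hcon
    have : b ≤ B := le_csInf hSne' (by rintro _ ⟨J, hJ, rfl⟩; exact hcon J hJ)
    linarith
  obtain ⟨I, hI, haI⟩ := hexI
  obtain ⟨J, hJ, hJb⟩ := hexJ
  obtain ⟨K, hK, hIK, hJK⟩ := hdir I hI J hJ
  refine ⟨K, hK, ?_⟩
  show K.carrier ⊆ Set.Ioo a b
  rw [carrier_eq]
  exact Set.Icc_subset_Ioo (lt_of_lt_of_le haI (lo_mono hIK))
    (lt_of_le_of_lt (hi_mono hJK) hJb)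

lemma continuous_pt : Continuous pt := by
  rw [continuous_def]
  intro U hU
  obtain ⟨hup, hind⟩ := hU
  rw [Metric.isOpen_iff]
  intro x hx
  set S : Set IntervalDomain := {I | ∃ ε : ℝ, 0 < ε ∧ I.carrier = Set.Icc (x - ε) (x + ε)}
    with hSdef
  have hSne : S.Nonempty :=
    ⟨⟨Set.Icc (x - 1) (x + 1), x - 1, x + 1, by linarith, rfl⟩, 1, one_pos, rfl⟩
  have hdir : DirectedOn (· ≤ ·) S := by
    rintro I ⟨ε₁, hε₁, h₁⟩ J ⟨ε₂, hε₂, h₂⟩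
    refine ⟨⟨Set.Icc (x - min ε₁ ε₂) (x + min ε₁ ε₂), _, _,
      by have := lt_min hε₁ hε₂; linarith, rfl⟩,
      ⟨min ε₁ ε₂, lt_min hε₁ hε₂, rfl⟩, ?_, ?_⟩
    · show I ≤ _
      rw [le_def, h₁]
      exact Set.Icc_subset_Icc (by simp [min_le_left]; linarith [min_le_left ε₁ ε₂])
        (by linarith [min_le_left ε₁ ε₂])
    · show J ≤ _
      rw [le_def, h₂]
      exact Set.Icc_subset_Icc (by linarith [min_le_right ε₁ ε₂])
        (by linarith [min_le_right ε₁ ε₂])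
  have hlub : IsLUB S (pt x) := by
    constructor
    · rintro I ⟨ε, hε, h⟩
      rw [le_def, pt_carrier, Set.singleton_subset_iff, h]
      exact ⟨by linarith, by linarith⟩
    · intro t ht
      rw [le_def, pt_carrier]
      intro y hy
      have key : ∀ ε : ℝ, 0 < ε → |y - x| ≤ ε := by
        intro ε hε
        have hmem : (⟨Set.Icc (x - ε) (x + ε), x - ε, x + ε, by linarith, rfl⟩ :
            IntervalDomain) ∈ S := ⟨ε, hε, rfl⟩
        have := ht hmem hy
        simp only [Set.mem_Icc] at this
        rw [abs_le]
        constructor <;> linarith [this.1, this.2]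
      have : |y - x| ≤ 0 := by
        by_contra hcon
        push_neg at hcon
        have := key (|y - x| / 2) (by linarith)
        linarith
      have : y - x = 0 := by
        have h0 := abs_nonneg (y - x)
        have : |y - x| = 0 := le_antisymm this h0
        exact abs_eq_zero.1 this
      simp [Set.mem_singleton_iff]
      linarith
  obtain ⟨I, hIS, hIU⟩ := hind S hSne hdir (pt x) hlub hx
  obtain ⟨ε, hε, hc⟩ := hIS
  refine ⟨ε, hε, fun y hy => ?_⟩
  rw [Metric.mem_ball, Real.dist_eq, abs_lt] at hy
  refine hup I hIU (pt y) ?_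
  rw [le_def, pt_carrier, Set.singleton_subset_iff, hc]
  exact ⟨by linarith, by linarith⟩

/-- The equivalence. -/
noncomputable def e : ℝ ≃ {I : IntervalDomain // IsMax I} where
  toFun x := ⟨pt x, pt_max x⟩
  invFun I := lo I.1
  left_inv x := lo_pt x
  right_inv I := by
    refine Subtype.ext (ext' ?_)
    rw [pt_carrier, max_carrier I.2]

lemma continuous_e_symm : Continuous (fun I : {I : IntervalDomain // IsMax I} => lo I.1) := by
  rw [continuous_def]
  intro V hV
  set W : Set IntervalDomain :=
    ⋃ (p : ℝ × ℝ) (_ : Set.Ioo p.1 p.2 ⊆ V), {I | I.carrier ⊆ Set.Ioo p.1 p.2} with hW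
  have hWopen : IsOpen W := isOpen_iUnion fun p => isOpen_iUnion fun _ => isOpen_U p.1 p.2
  have heq : (fun I : {I : IntervalDomain // IsMax I} => lo I.1) ⁻¹' V
      = Subtype.val ⁻¹' W := by
    ext ⟨I, hI⟩
    simp only [Set.mem_preimage, hW, Set.mem_iUnion]
    constructor
    · intro hx
      obtain ⟨l, u, hmem, hsub⟩ :=
        mem_nhds_iff_exists_Ioo_subset.1 (hV.mem_nhds hx)
      exact ⟨(l, u), hsub, by
        show I.carrier ⊆ _
        rw [max_carrier hI]; exact Set.singleton_subset_iff.2 hmem⟩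
    · rintro ⟨p, hsub, hmem⟩
      exact hsub (hmem (by rw [max_carrier hI]; exact Set.mem_singleton _))
  rw [heq]
  exact hWopen.preimage continuous_subtype_val

end IDAux

/-- The maximal elements of the interval domain, with the relative Scott
topology, are homeomorphic to `ℝ` via `x ↦ [x,x]`. -/
theorem intervalDomain_max_homeomorph_real :
    ∃ h : ℝ ≃ₜ {I : IntervalDomain // IsMax I},
      ∀ x : ℝ, (h x).1.carrier = Set.Icc x x := by
  refine ⟨{ toEquiv := IDAux.e
            continuous_toFun := IDAux.continuous_pt.subtype_mk _
            continuous_invFun := IDAux.continuous_e_symm }, fun x => rfl⟩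
end

section
/- On a bicontinuous poset P, the Lawson topology is contained in the interval topology. -/
/-- The Lawson topology on a continuous poset, generated by the basic sets
`↟x \\ ↑F` for `F` finite. -/
def lawsonTop (P : Type*) [Preorder P] : TopologicalSpace P :=
  .generateFrom {s | ∃ (x : P) (F : Finset P),
    s = {y | wayBelow x y} \ {y | ∃ f ∈ F, f ≤ y}}

lemma wayBelow_le_left {P : Type*} [Preorder P] {x' x y : P} (h : x' ≤ x)
    (hxy : wayBelow x y) : wayBelow x' y := by
  intro S hS hdir s hs hys
  obtain ⟨z, hzS, hxz⟩ := hxy S hS hdir s hs hys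
  exact ⟨z, hzS, h.trans hxz⟩

lemma wayBelow_le_right {P : Type*} [Preorder P] {x y y' : P} (hxy : wayBelow x y)
    (h : y ≤ y') : wayBelow x y' := by
  intro S hS hdir s hs hys
  exact hxy S hS hdir s hs (h.trans hys)

lemma wayBelow_le {P : Type*} [Preorder P] {x y : P} (hxy : wayBelow x y) : x ≤ y := by
  obtain ⟨z, hz, hxz⟩ := hxy {y} ⟨y, rfl⟩
    (fun a ha b hb => ⟨y, rfl, by simp_all, by simp_all⟩) y isLUB_singleton le_rfl
  cases hz; exact hxz

lemma filtered_finset_le {P : Type*} [Preorder P] {S : Set P}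
    (hne : S.Nonempty) (hdir : DirectedOn (· ≥ ·) S) (F : Finset P) (g : P → P)
    (hg : ∀ f ∈ F, g f ∈ S) : ∃ b ∈ S, ∀ f ∈ F, b ≤ g f := by
  classical
  induction F using Finset.induction with
  | empty => obtain ⟨b, hb⟩ := hne; exact ⟨b, hb, by simp⟩
  | @insert f F hnotmem ih =>
    obtain ⟨b, hbS, hb⟩ := ih (fun f hf => hg f (Finset.mem_insert_of_mem hf))
    obtain ⟨c, hcS, hcb, hcf⟩ := hdir b hbS (g f) (hg f (Finset.mem_insert_self f F))
    refine ⟨c, hcS, fun f' hf' => ?_⟩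
    rcases Finset.mem_insert.mp hf' with rfl | hf'
    · exact hcf
    · exact hcb.trans (hb f' hf')

lemma interval_basic_open {P : Type*} [Preorder P] (a b : P) :
    @IsOpen P (intervalTop P) {x | wayBelow a x ∧ wayBelow x b} :=
  TopologicalSpace.GenerateOpen.basic _ ⟨a, b, rfl⟩

lemma interval_open_of_nbhd {P : Type*} [Preorder P] {s : Set P}
    (h : ∀ y ∈ s, ∃ a b : P, (wayBelow a y ∧ wayBelow y b) ∧
      {x | wayBelow a x ∧ wayBelow x b} ⊆ s) :
    @IsOpen P (intervalTop P) s := by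
  letI : TopologicalSpace P := intervalTop P
  have hs : s = ⋃₀ {V | (∃ a b : P, V = {x | wayBelow a x ∧ wayBelow x b}) ∧ V ⊆ s} := by
    ext y
    constructor
    · intro hy
      obtain ⟨a, b, hyab, hsub⟩ := h y hy
      exact ⟨_, ⟨⟨a, b, rfl⟩, hsub⟩, hyab⟩
    · rintro ⟨V, ⟨_, hVs⟩, hyV⟩
      exact hVs hyV
  rw [hs]
  exact isOpen_sUnion (fun V hV => by
    obtain ⟨⟨a, b, rfl⟩, _⟩ := hV
    exact interval_basic_open a b)

/-- On a bicontinuous poset the Lawson topology is contained in the interval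
topology: every Lawson-open set is interval-open. -/
theorem lawson_subset_interval {P : Type*} [PartialOrder P]
    (hP : IsBicontinuous P) :
    ∀ U : Set P, @IsOpen P (lawsonTop P) U → @IsOpen P (intervalTop P) U := by
  classical
  intro U hU
  letI : TopologicalSpace P := intervalTop P
  change TopologicalSpace.GenerateOpen _ U at hU
  induction hU with
  | univ => exact isOpen_univ
  | inter s t _ _ hs ht => exact hs.inter ht
  | sUnion S _ hS => exact isOpen_sUnion hS
  | basic s hs =>
    obtain ⟨x, F, rfl⟩ := hs
    apply interval_open_of_nbhd
    rintro y ⟨hxy, hFy⟩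
    -- get `a` with `x ≤ a ≪ y`
    obtain ⟨S, -, hSne, hSdir, hSwb, hSlub⟩ := hP.1 y
    obtain ⟨a, haS, hxa⟩ := hxy S hSne hSdir y hSlub le_rfl
    have hay : wayBelow a y := hSwb a haS
    -- the filtered set above y
    obtain ⟨hTne, hTdir, hTglb⟩ := hP.2.2 y
    -- for each f ∈ F, choose b_f above y with ¬ f ≪ b_f
    have key : ∀ f ∈ F, ∃ c, wayBelow y c ∧ ¬ wayBelow f c := by
      intro f hf
      by_contra hcon
      push_neg at hcon
      have hfy : f ≤ y := hTglb.2 (fun c hc => wayBelow_le (hcon c hc))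
      exact hFy ⟨f, hf, hfy⟩
    let g : P → P := fun f => if h : f ∈ F then (key f h).choose else y
    have hgT : ∀ f ∈ F, g f ∈ {c | wayBelow y c} := by
      intro f hf
      simp only [g, dif_pos hf]
      exact (key f hf).choose_spec.1
    have hgn : ∀ f ∈ F, ¬ wayBelow f (g f) := by
      intro f hf
      simp only [g, dif_pos hf]
      exact (key f hf).choose_spec.2
    obtain ⟨b, hbT, hb⟩ := filtered_finset_le hTne hTdir F g hgT
    refine ⟨a, b, ⟨hay, hbT⟩, ?_⟩
    rintro z ⟨haz, hzb⟩
    refine ⟨wayBelow_le_left hxa haz, ?_⟩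
    rintro ⟨f, hf, hfz⟩
    exact hgn f hf (wayBelow_le_right (wayBelow_le_left hfz hzb) (hb f hf))
end

section
/- The interval topology on a bicontinuous poset is Hausdorff. -/
lemma wayBelow_le_left_s9 {P : Type*} [Preorder P] {a z : P} (h : wayBelow a z) : a ≤ z := by
  obtain ⟨s, hs, has⟩ := h {z} ⟨z, rfl⟩
    (fun u hu v hv => ⟨z, rfl, hu.le, hv.le⟩) z isLUB_singleton le_rfl
  exact has.trans hs.le

lemma wayBelow_le_right_s9 {P : Type*} [Preorder P] {z b : P} (h : wayBelow z b) : z ≤ b := by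
  obtain ⟨s, hs, hzs⟩ := h {b} ⟨b, rfl⟩
    (fun u hu v hv => ⟨b, rfl, hu.le, hv.le⟩) b isLUB_singleton le_rfl
  exact hzs.trans hs.le

lemma interval_sep {P : Type*} [PartialOrder P] (hP : IsBicontinuous P) {x y : P}
    (hxy : ¬ x ≤ y) :
    ∃ u v : Set P, (intervalTop P).IsOpen u ∧ (intervalTop P).IsOpen v ∧
      x ∈ u ∧ y ∈ v ∧ Disjoint u v := by
  obtain ⟨hcont, _, hup⟩ := hP
  -- directed set way below x with lub x
  obtain ⟨Sx, _, hSxne, hSxdir, hSxwb, hSxlub⟩ := hcont x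
  -- find a ∈ Sx with ¬ a ≤ y
  have ha : ∃ a ∈ Sx, ¬ a ≤ y := by
    by_contra h
    push_neg at h
    exact hxy (hSxlub.2 h)
  obtain ⟨a, haSx, hay⟩ := ha
  -- the set above y, filtered with glb y
  obtain ⟨hTne, _, hTglb⟩ := hup y
  have hb : ∃ b, wayBelow y b ∧ ¬ a ≤ b := by
    by_contra h
    push_neg at h
    exact hay (hTglb.2 fun b hbT => h b hbT)
  obtain ⟨b, hyb, hab⟩ := hb
  -- b' with x ≪ b'
  obtain ⟨b', hxb'⟩ := (hup x).1
  -- a' ≪ y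
  obtain ⟨Sy, _, hSyne, _, hSywb, _⟩ := hcont y
  obtain ⟨a', ha'Sy⟩ := hSyne
  refine ⟨{z | wayBelow a z ∧ wayBelow z b'}, {z | wayBelow a' z ∧ wayBelow z b},
    TopologicalSpace.GenerateOpen.basic _ ⟨a, b', rfl⟩,
    TopologicalSpace.GenerateOpen.basic _ ⟨a', b, rfl⟩,
    ⟨hSxwb a haSx, hxb'⟩, ⟨hSywb a' ha'Sy, hyb⟩, ?_⟩
  rw [Set.disjoint_left]
  rintro z ⟨haz, -⟩ ⟨-, hzb⟩
  exact hab ((wayBelow_le_left_s9 haz).trans (wayBelow_le_right_s9 hzb))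

/-- The interval topology on a bicontinuous poset is Hausdorff. -/
theorem interval_t2 {P : Type*} [PartialOrder P] (hP : IsBicontinuous P) :
    @T2Space P (intervalTop P) := by
  letI := intervalTop P
  constructor
  intro x y hxy
  have : ¬(x ≤ y ∧ y ≤ x) := fun h => hxy (le_antisymm h.1 h.2)
  rcases not_and_or.mp this with h | h
  · exact interval_sep hP h
  · obtain ⟨u, v, hu, hv, hyu, hxv, huv⟩ := interval_sep hP h
    exact ⟨v, u, hv, hu, hxv, hyu, huv.symm⟩
end

section
/- If X is a globally hyperbolic poset, then the set IX of closed intervals [a,b] = {x : a ≤ x ≤ b} for a ≤ b, ordered by reverse inclusion, is a continuous dcpo in which [a,b] ≪ [c,d] iff a ≪ c and d ≪ b. -/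
variable (X : Type*) [PartialOrder X]

/-- The interval domain of a poset: closed order intervals `[a,b]`. -/
structure IntDom where
  carrier : Set X
  isIcc : ∃ a b : X, a ≤ b ∧ carrier = Set.Icc a b

/-- Reverse inclusion order on the interval domain. -/
instance : PartialOrder (IntDom X) where
  le I J := J.carrier ⊆ I.carrier
  le_refl I := subset_rfl
  le_trans I J K h1 h2 := Set.Subset.trans h2 h1
  le_antisymm I J h1 h2 := by
    cases I; cases J
    simp only [IntDom.mk.injEq]
    exact subset_antisymm h2 h1

open Set Filter

section MyGenAux

variable {P : Type*} [Preorder P]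

theorem myWayBelow_le {x y : P} (h : wayBelow x y) : x ≤ y := by
  obtain ⟨z, hz, hxz⟩ := h {y} ⟨y, rfl⟩
    (fun a ha b hb => ⟨y, rfl, (mem_singleton_iff.mp ha).le, (mem_singleton_iff.mp hb).le⟩)
    y isLUB_singleton le_rfl
  exact hxz.trans (mem_singleton_iff.mp hz).le

theorem myWayBelow_mono_left {x y z : P} (hxy : x ≤ y) (h : wayBelow y z) : wayBelow x z :=
  fun S hne hdir s hs hzs =>
    let ⟨w, hw, hyw⟩ := h S hne hdir s hs hzs
    ⟨w, hw, hxy.trans hyw⟩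

theorem myWayBelow_mono_right {x y z : P} (h : wayBelow x y) (hyz : y ≤ z) : wayBelow x z :=
  fun S hne hdir s hs hzs => h S hne hdir s hs (hyz.trans hzs)

theorem myExists_wayBelow (hc : IsContinuousPoset P) (x : P) : ∃ a, wayBelow a x := by
  obtain ⟨S, -, ⟨s, hs⟩, -, hwb, -⟩ := hc x
  exact ⟨s, hwb s hs⟩

theorem myLe_of_forall_wayBelow (hc : IsContinuousPoset P) {x y : P}
    (h : ∀ a, wayBelow a x → a ≤ y) : x ≤ y := by
  obtain ⟨S, -, -, -, hwb, hlub⟩ := hc x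
  exact hlub.2 fun s hs => h s (hwb s hs)

theorem myIsOpen_basic (U : Set P)
    (h : ∀ x ∈ U, ∃ a b, (wayBelow a x ∧ wayBelow x b) ∧
      {y | wayBelow a y ∧ wayBelow y b} ⊆ U) :
    @IsOpen P (intervalTop P) U := by
  have hU : U = ⋃₀ {s | (∃ a b : P, s = {y | wayBelow a y ∧ wayBelow y b}) ∧ s ⊆ U} := by
    ext x
    constructor
    · intro hx
      obtain ⟨a, b, hab, hsub⟩ := h x hx
      exact ⟨_, ⟨⟨a, b, rfl⟩, hsub⟩, hab⟩
    · rintro ⟨s, ⟨-, hsub⟩, hxs⟩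
      exact hsub hxs
  rw [hU]
  exact TopologicalSpace.GenerateOpen.sUnion _ fun s hs => .basic s hs.1

end MyGenAux

section MyPOAux

variable {P : Type*} [PartialOrder P]

theorem myIsClosed_Ici (hbc : IsBicontinuous P) (c : P) :
    @IsClosed P (intervalTop P) (Ici c) := by
  letI := intervalTop P
  rw [← isOpen_compl_iff]
  apply myIsOpen_basic
  intro x hx
  simp only [mem_compl_iff, mem_Ici] at hx
  obtain ⟨hVne, hVdir, hVglb⟩ := hbc.2.2 x
  have hb : ∃ b ∈ {a | wayBelow x a}, ¬ c ≤ b := by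
    by_contra hcon
    push_neg at hcon
    exact hx (hVglb.2 hcon)
  obtain ⟨b, hbmem, hcb⟩ := hb
  obtain ⟨a, ha⟩ := myExists_wayBelow hbc.1 x
  refine ⟨a, b, ⟨ha, hbmem⟩, ?_⟩
  rintro y ⟨-, hyb⟩ hcy
  exact hcb (hcy.trans (myWayBelow_le hyb))

theorem myIsClosed_Iic (hbc : IsBicontinuous P) (d : P) :
    @IsClosed P (intervalTop P) (Iic d) := by
  letI := intervalTop P
  rw [← isOpen_compl_iff]
  apply myIsOpen_basic
  intro x hx
  simp only [mem_compl_iff, mem_Iic] at hx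
  have ha : ∃ a, wayBelow a x ∧ ¬ a ≤ d := by
    by_contra hcon
    push_neg at hcon
    exact hx (myLe_of_forall_wayBelow hbc.1 fun a haw => hcon a haw)
  obtain ⟨a, haw, had⟩ := ha
  obtain ⟨hVne, -, -⟩ := hbc.2.2 x
  obtain ⟨b, hb⟩ := hVne
  refine ⟨a, b, ⟨haw, hb⟩, ?_⟩
  rintro y ⟨hay, -⟩ hyd
  exact had ((myWayBelow_le hay).trans hyd)

end MyPOAux

theorem myExists_isLUB (hX : IsGloballyHyperbolic X) {A : Set X} {p q : X} (hpq : p ≤ q)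
    (hA : A ⊆ Icc p q) (hne : A.Nonempty) (hdir : DirectedOn (· ≤ ·) A) :
    ∃ a, IsLUB A a := by
  letI := intervalTop X
  obtain ⟨a0, ha0⟩ := hne
  haveI : Nonempty A := ⟨⟨a0, ha0⟩⟩
  haveI : Nonempty X := ⟨a0⟩
  set f : A → Filter X := fun a => 𝓟 {x | x ∈ A ∧ a.1 ≤ x} with hf
  have hneb : ∀ a : A, (f a).NeBot := fun a =>
    Filter.principal_neBot_iff.mpr ⟨a.1, a.2, le_rfl⟩
  have hdirf : Directed (· ≥ ·) f := by
    rintro a b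
    obtain ⟨c, hc, hac, hbc⟩ := hdir a.1 a.2 b.1 b.2
    exact ⟨⟨c, hc⟩, Filter.principal_mono.mpr fun x hx => ⟨hx.1, hac.trans hx.2⟩,
      Filter.principal_mono.mpr fun x hx => ⟨hx.1, hbc.trans hx.2⟩⟩
  haveI hFne : (⨅ a, f a).NeBot := Filter.iInf_neBot_of_directed hdirf hneb
  have hle : (⨅ a, f a) ≤ 𝓟 (Icc p q) :=
    le_trans (iInf_le f ⟨a0, ha0⟩) (Filter.principal_mono.mpr fun x hx => hA hx.1)
  obtain ⟨x, -, hcl⟩ := hX.2 p q hpq hle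
  have hclos : ∀ s : Set X, s ∈ ⨅ a, f a → x ∈ closure s := fun s hs =>
    mem_closure_iff_clusterPt.mpr (hcl.mono (le_principal_iff.mpr hs))
  refine ⟨x, ?_, ?_⟩
  · intro a ha
    have h1 : {y | y ∈ A ∧ a ≤ y} ∈ ⨅ b, f b :=
      mem_iInf_of_mem (⟨a, ha⟩ : A) (mem_principal_self _)
    exact closure_minimal (fun y hy => hy.2) (myIsClosed_Ici hX.1 a) (hclos _ h1)
  · intro u hu
    have h1 : {y | y ∈ A ∧ a0 ≤ y} ∈ ⨅ b, f b :=
      mem_iInf_of_mem (⟨a0, ha0⟩ : A) (mem_principal_self _)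
    exact closure_minimal (fun y hy => hu hy.1) (myIsClosed_Iic hX.1 u) (hclos _ h1)

theorem myExists_isGLB (hX : IsGloballyHyperbolic X) {B : Set X} {p q : X} (hpq : p ≤ q)
    (hB : B ⊆ Icc p q) (hne : B.Nonempty) (hdir : DirectedOn (· ≥ ·) B) :
    ∃ b, IsGLB B b := by
  letI := intervalTop X
  obtain ⟨b0, hb0⟩ := hne
  haveI : Nonempty B := ⟨⟨b0, hb0⟩⟩
  haveI : Nonempty X := ⟨b0⟩
  set f : B → Filter X := fun b => 𝓟 {x | x ∈ B ∧ x ≤ b.1} with hf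
  have hneb : ∀ b : B, (f b).NeBot := fun b =>
    Filter.principal_neBot_iff.mpr ⟨b.1, b.2, le_rfl⟩
  have hdirf : Directed (· ≥ ·) f := by
    rintro a b
    obtain ⟨c, hc, hac, hbc⟩ := hdir a.1 a.2 b.1 b.2
    exact ⟨⟨c, hc⟩, Filter.principal_mono.mpr fun x hx => ⟨hx.1, hx.2.trans hac⟩,
      Filter.principal_mono.mpr fun x hx => ⟨hx.1, hx.2.trans hbc⟩⟩
  haveI hFne : (⨅ b, f b).NeBot := Filter.iInf_neBot_of_directed hdirf hneb
  have hle : (⨅ b, f b) ≤ 𝓟 (Icc p q) :=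
    le_trans (iInf_le f ⟨b0, hb0⟩) (Filter.principal_mono.mpr fun x hx => hB hx.1)
  obtain ⟨x, -, hcl⟩ := hX.2 p q hpq hle
  have hclos : ∀ s : Set X, s ∈ ⨅ b, f b → x ∈ closure s := fun s hs =>
    mem_closure_iff_clusterPt.mpr (hcl.mono (le_principal_iff.mpr hs))
  refine ⟨x, ?_, ?_⟩
  · intro b hb
    have h1 : {y | y ∈ B ∧ y ≤ b} ∈ ⨅ c, f c :=
      mem_iInf_of_mem (⟨b, hb⟩ : B) (mem_principal_self _)
    exact closure_minimal (fun y hy => hy.2) (myIsClosed_Iic hX.1 b) (hclos _ h1)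
  · intro l hl
    have h1 : {y | y ∈ B ∧ y ≤ b0} ∈ ⨅ c, f c :=
      mem_iInf_of_mem (⟨b0, hb0⟩ : B) (mem_principal_self _)
    exact closure_minimal (fun y hy => hl hy.1) (myIsClosed_Ici hX.1 l) (hclos _ h1)

noncomputable def myLend (I : IntDom X) : X := I.isIcc.choose

noncomputable def myRend (I : IntDom X) : X := I.isIcc.choose_spec.choose

theorem myLend_le_rend (I : IntDom X) : myLend X I ≤ myRend X I :=
  I.isIcc.choose_spec.choose_spec.1

theorem myCarrier_eq (I : IntDom X) : I.carrier = Icc (myLend X I) (myRend X I) :=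
  I.isIcc.choose_spec.choose_spec.2

theorem myIcc_subset_iff {a b c d : X} (hcd : c ≤ d) :
    Icc c d ⊆ Icc a b ↔ a ≤ c ∧ d ≤ b :=
  ⟨fun hs => ⟨(hs ⟨le_rfl, hcd⟩).1, (hs ⟨hcd, le_rfl⟩).2⟩,
   fun h => Icc_subset_Icc h.1 h.2⟩

theorem myLe_iff {I J : IntDom X} :
    I ≤ J ↔ myLend X I ≤ myLend X J ∧ myRend X J ≤ myRend X I := by
  show J.carrier ⊆ I.carrier ↔ _
  rw [myCarrier_eq, myCarrier_eq, myIcc_subset_iff X (myLend_le_rend X J)]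

theorem myExt {I J : IntDom X} (h : I.carrier = J.carrier) : I = J := by
  cases I; cases J
  simp only [IntDom.mk.injEq]
  exact h

theorem myStruct (hX : IsGloballyHyperbolic X) (T : Set (IntDom X)) (hTne : T.Nonempty)
    (hTdir : DirectedOn (· ≤ ·) T) :
    ∃ (T' : Set (IntDom X)) (a' b' : X) (h : a' ≤ b'),
      T' ⊆ T ∧ T'.Nonempty ∧ DirectedOn (· ≤ ·) T' ∧
      DirectedOn (· ≤ ·) (myLend X '' T') ∧ DirectedOn (· ≥ ·) (myRend X '' T') ∧
      IsLUB (myLend X '' T') a' ∧ IsGLB (myRend X '' T') b' ∧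
      IsLUB T ⟨Icc a' b', a', b', h, rfl⟩ := by
  obtain ⟨I₀, hI₀⟩ := hTne
  set T' : Set (IntDom X) := {I | I ∈ T ∧ I₀ ≤ I} with hT'
  have hsub : T' ⊆ T := fun I hI => hI.1
  have hT'ne : T'.Nonempty := ⟨I₀, hI₀, le_rfl⟩
  have hT'dir : DirectedOn (· ≤ ·) T' := by
    rintro I ⟨hIT, -⟩ J ⟨hJT, -⟩
    obtain ⟨K, hKT, hIK, hJK⟩ := hTdir I hIT J hJT
    obtain ⟨L, hLT, hKL, h0L⟩ := hTdir K hKT I₀ hI₀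
    exact ⟨L, ⟨hLT, h0L⟩, hIK.trans hKL, hJK.trans hKL⟩
  have hmemA : ∀ I ∈ T', myLend X I ∈ Icc (myLend X I₀) (myRend X I₀) := by
    intro I hI
    have h1 : myLend X I ∈ I.carrier := by
      rw [myCarrier_eq]; exact ⟨le_rfl, myLend_le_rend X I⟩
    have h2 : I.carrier ⊆ I₀.carrier := hI.2
    have h3 := h2 h1
    rwa [myCarrier_eq] at h3
  have hmemB : ∀ I ∈ T', myRend X I ∈ Icc (myLend X I₀) (myRend X I₀) := by
    intro I hI
    have h1 : myRend X I ∈ I.carrier := by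
      rw [myCarrier_eq]; exact ⟨myLend_le_rend X I, le_rfl⟩
    have h3 := hI.2 h1
    rwa [myCarrier_eq] at h3
  have hAdir : DirectedOn (· ≤ ·) (myLend X '' T') := by
    rintro - ⟨I, hI, rfl⟩ - ⟨J, hJ, rfl⟩
    obtain ⟨K, hK, hIK, hJK⟩ := hT'dir I hI J hJ
    exact ⟨myLend X K, ⟨K, hK, rfl⟩, ((myLe_iff X).mp hIK).1, ((myLe_iff X).mp hJK).1⟩
  have hBdir : DirectedOn (· ≥ ·) (myRend X '' T') := by
    rintro - ⟨I, hI, rfl⟩ - ⟨J, hJ, rfl⟩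
    obtain ⟨K, hK, hIK, hJK⟩ := hT'dir I hI J hJ
    exact ⟨myRend X K, ⟨K, hK, rfl⟩, ((myLe_iff X).mp hIK).2, ((myLe_iff X).mp hJK).2⟩
  obtain ⟨a', ha'⟩ := myExists_isLUB X hX (myLend_le_rend X I₀)
    (by rintro - ⟨I, hI, rfl⟩; exact hmemA I hI) (hT'ne.image _) hAdir
  obtain ⟨b', hb'⟩ := myExists_isGLB X hX (myLend_le_rend X I₀)
    (by rintro - ⟨I, hI, rfl⟩; exact hmemB I hI) (hT'ne.image _) hBdir
  have hbub : ∀ J ∈ T', a' ≤ myRend X J := by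
    intro J hJ
    refine ha'.2 ?_
    rintro - ⟨I, hI, rfl⟩
    obtain ⟨K, hK, hIK, hJK⟩ := hT'dir I hI J hJ
    exact (((myLe_iff X).mp hIK).1).trans
      ((myLend_le_rend X K).trans ((myLe_iff X).mp hJK).2)
  have hab : a' ≤ b' := hb'.2 (by rintro - ⟨J, hJ, rfl⟩; exact hbub J hJ)
  refine ⟨T', a', b', hab, hsub, hT'ne, hT'dir, hAdir, hBdir, ha', hb', ?_, ?_⟩
  · intro I hI
    obtain ⟨K, hKT, hIK, h0K⟩ := hTdir I hI I₀ hI₀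
    have hK' : K ∈ T' := ⟨hKT, h0K⟩
    refine hIK.trans ?_
    show Icc a' b' ⊆ K.carrier
    rw [myCarrier_eq]
    exact Icc_subset_Icc (ha'.1 ⟨K, hK', rfl⟩) (hb'.1 ⟨K, hK', rfl⟩)
  · intro u hu
    show u.carrier ⊆ Icc a' b'
    rw [myCarrier_eq]
    refine Icc_subset_Icc ?_ ?_
    · exact ha'.2 (by rintro - ⟨I, hI, rfl⟩; exact ((myLe_iff X).mp (hu (hsub hI))).1)
    · exact hb'.2 (by rintro - ⟨I, hI, rfl⟩; exact ((myLe_iff X).mp (hu (hsub hI))).2)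

/-- For a globally hyperbolic poset `X`, the interval domain `IX` is a
continuous dcpo in which `[a,b] ≪ [c,d]` iff `a ≪ c` and `d ≪ b`. -/
theorem intDom_continuous_dcpo (hX : IsGloballyHyperbolic X) :
    IsDcpo (IntDom X) ∧ IsContinuousPoset (IntDom X) ∧
    ∀ (a b c d : X) (hab : a ≤ b) (hcd : c ≤ d),
      wayBelow (⟨Set.Icc a b, a, b, hab, rfl⟩ : IntDom X)
          (⟨Set.Icc c d, c, d, hcd, rfl⟩ : IntDom X) ↔
        wayBelow a c ∧ wayBelow d b := by
  have hdcpo : IsDcpo (IntDom X) := by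
    intro T hTne hTdir
    obtain ⟨T', a', b', h, -, -, -, -, -, -, -, hlub⟩ := myStruct X hX T hTne hTdir
    exact ⟨_, hlub⟩
  have hrev : ∀ (a b c d : X) (hab : a ≤ b) (hcd : c ≤ d), wayBelow a c → wayBelow d b →
      wayBelow (⟨Icc a b, a, b, hab, rfl⟩ : IntDom X) ⟨Icc c d, c, d, hcd, rfl⟩ := by
    intro a b c d hab hcd hac hdb T hTne hTdir s hs hle
    obtain ⟨T', a', b', h, hsub, hT'ne, hT'dir, hAdir, hBdir, ha', hb', hlub⟩ :=
      myStruct X hX T hTne hTdir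
    have hseq : s = ⟨Icc a' b', a', b', h, rfl⟩ := hs.unique hlub
    rw [hseq] at hle
    have hcc : Icc a' b' ⊆ Icc c d := hle
    obtain ⟨hca', hb'd⟩ := (myIcc_subset_iff X h).mp hcc
    have haa' : wayBelow a a' := myWayBelow_mono_right hac hca'
    obtain ⟨-, ⟨I, hI, rfl⟩, haI⟩ :=
      haa' (myLend X '' T') (hT'ne.image _) hAdir a' ha' le_rfl
    have hdual := (hX.1.2.1 d b).mp hdb
    obtain ⟨-, ⟨J, hJ, rfl⟩, hJb⟩ :=
      hdual (myRend X '' T') (hT'ne.image _) hBdir b' hb' hb'd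
    obtain ⟨K, hK, hIK, hJK⟩ := hT'dir I hI J hJ
    refine ⟨K, hsub hK, ?_⟩
    show K.carrier ⊆ Icc a b
    rw [myCarrier_eq]
    exact Icc_subset_Icc (haI.trans ((myLe_iff X).mp hIK).1)
      (((myLe_iff X).mp hJK).2.trans hJb)
  have hfwd : ∀ (a b c d : X) (hab : a ≤ b) (hcd : c ≤ d),
      wayBelow (⟨Icc a b, a, b, hab, rfl⟩ : IntDom X) ⟨Icc c d, c, d, hcd, rfl⟩ →
      wayBelow a c ∧ wayBelow d b := by
    intro a b c d hab hcd h
    obtain ⟨S₀, -, hS₀ne, hS₀dir, hS₀wb, hS₀lub⟩ := hX.1.1 c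
    obtain ⟨hVne, hVdir, hVglb⟩ := hX.1.2.2 d
    constructor
    · set T : Set (IntDom X) :=
        {I | ∃ w, ∃ hw : w ∈ S₀,
          I = ⟨Icc w d, w, d, (myWayBelow_le (hS₀wb w hw)).trans hcd, rfl⟩} with hT
      have hTne : T.Nonempty := by
        obtain ⟨w, hw⟩ := hS₀ne
        exact ⟨_, w, hw, rfl⟩
      have hTdir : DirectedOn (· ≤ ·) T := by
        rintro - ⟨w, hw, rfl⟩ - ⟨w', hw', rfl⟩
        obtain ⟨w'', hw'', h1, h2⟩ := hS₀dir w hw w' hw'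
        refine ⟨_, ⟨w'', hw'', rfl⟩, ?_, ?_⟩
        · show Icc w'' d ⊆ Icc w d
          exact Icc_subset_Icc h1 le_rfl
        · show Icc w'' d ⊆ Icc w' d
          exact Icc_subset_Icc h2 le_rfl
      have hlub : IsLUB T (⟨Icc c d, c, d, hcd, rfl⟩ : IntDom X) := by
        constructor
        · rintro - ⟨w, hw, rfl⟩
          show Icc c d ⊆ Icc w d
          exact Icc_subset_Icc (myWayBelow_le (hS₀wb w hw)) le_rfl
        · intro u hu
          show u.carrier ⊆ Icc c d
          rw [myCarrier_eq]
          refine Icc_subset_Icc ?_ ?_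
          · refine hS₀lub.2 fun w hw => ?_
            have h1 := hu (⟨w, hw, rfl⟩ : _ ∈ T)
            have h2 : myLend X u ∈ Icc w d :=
              h1 (by rw [myCarrier_eq]; exact ⟨le_rfl, myLend_le_rend X u⟩)
            exact h2.1
          · obtain ⟨w, hw⟩ := hS₀ne
            have h1 := hu (⟨w, hw, rfl⟩ : _ ∈ T)
            have h2 : myRend X u ∈ Icc w d :=
              h1 (by rw [myCarrier_eq]; exact ⟨myLend_le_rend X u, le_rfl⟩)
            exact h2.2
      obtain ⟨z, hzT, hz⟩ := h T hTne hTdir _ hlub le_rfl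
      obtain ⟨w, hw, rfl⟩ := hzT
      have hsub2 : Icc w d ⊆ Icc a b := hz
      obtain ⟨haw, -⟩ :=
        (myIcc_subset_iff X ((myWayBelow_le (hS₀wb w hw)).trans hcd)).mp hsub2
      exact myWayBelow_mono_left haw (hS₀wb w hw)
    · set T : Set (IntDom X) :=
        {I | ∃ v, ∃ hv : v ∈ {a | wayBelow d a},
          I = ⟨Icc c v, c, v, hcd.trans (myWayBelow_le hv), rfl⟩} with hT
      have hTne : T.Nonempty := by
        obtain ⟨v, hv⟩ := hVne
        exact ⟨_, v, hv, rfl⟩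
      have hTdir : DirectedOn (· ≤ ·) T := by
        rintro - ⟨v, hv, rfl⟩ - ⟨v', hv', rfl⟩
        obtain ⟨v'', hv'', h1, h2⟩ := hVdir v hv v' hv'
        refine ⟨_, ⟨v'', hv'', rfl⟩, ?_, ?_⟩
        · show Icc c v'' ⊆ Icc c v
          exact Icc_subset_Icc le_rfl h1
        · show Icc c v'' ⊆ Icc c v'
          exact Icc_subset_Icc le_rfl h2
      have hlub : IsLUB T (⟨Icc c d, c, d, hcd, rfl⟩ : IntDom X) := by
        constructor
        · rintro - ⟨v, hv, rfl⟩
          show Icc c d ⊆ Icc c v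
          exact Icc_subset_Icc le_rfl (myWayBelow_le hv)
        · intro u hu
          show u.carrier ⊆ Icc c d
          rw [myCarrier_eq]
          refine Icc_subset_Icc ?_ ?_
          · obtain ⟨v, hv⟩ := hVne
            have h1 := hu (⟨v, hv, rfl⟩ : _ ∈ T)
            have h2 : myLend X u ∈ Icc c v :=
              h1 (by rw [myCarrier_eq]; exact ⟨le_rfl, myLend_le_rend X u⟩)
            exact h2.1
          · refine hVglb.2 fun v hv => ?_
            have h1 := hu (⟨v, hv, rfl⟩ : _ ∈ T)
            have h2 : myRend X u ∈ Icc c v :=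
              h1 (by rw [myCarrier_eq]; exact ⟨myLend_le_rend X u, le_rfl⟩)
            exact h2.2
      obtain ⟨z, hzT, hz⟩ := h T hTne hTdir _ hlub le_rfl
      obtain ⟨v, hv, rfl⟩ := hzT
      have hsub2 : Icc c v ⊆ Icc a b := hz
      obtain ⟨-, hvb⟩ :=
        (myIcc_subset_iff X (hcd.trans (myWayBelow_le hv))).mp hsub2
      exact myWayBelow_mono_right hv hvb
  have hcontIX : IsContinuousPoset (IntDom X) := by
    intro I
    obtain ⟨c, d, hcd, hIc⟩ := I.isIcc
    have hIeq : I = ⟨Icc c d, c, d, hcd, rfl⟩ := myExt X hIc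
    obtain ⟨S₀, -, hS₀ne, hS₀dir, hS₀wb, hS₀lub⟩ := hX.1.1 c
    obtain ⟨hVne, hVdir, hVglb⟩ := hX.1.2.2 d
    set S : Set (IntDom X) :=
      {J | ∃ w, ∃ hw : w ∈ S₀, ∃ v, ∃ hv : v ∈ {a | wayBelow d a},
        J = ⟨Icc w v, w, v,
          (myWayBelow_le (hS₀wb w hw)).trans (hcd.trans (myWayBelow_le hv)), rfl⟩} with hS
    refine ⟨S, subset_univ _, ?_, ?_, ?_, ?_⟩
    · obtain ⟨w, hw⟩ := hS₀ne
      obtain ⟨v, hv⟩ := hVne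
      exact ⟨_, w, hw, v, hv, rfl⟩
    · rintro - ⟨w, hw, v, hv, rfl⟩ - ⟨w', hw', v', hv', rfl⟩
      obtain ⟨w'', hw'', hw1, hw2⟩ := hS₀dir w hw w' hw'
      obtain ⟨v'', hv'', hv1, hv2⟩ := hVdir v hv v' hv'
      refine ⟨_, ⟨w'', hw'', v'', hv'', rfl⟩, ?_, ?_⟩
      · show Icc w'' v'' ⊆ Icc w v
        exact Icc_subset_Icc hw1 hv1
      · show Icc w'' v'' ⊆ Icc w' v'
        exact Icc_subset_Icc hw2 hv2
    · rintro - ⟨w, hw, v, hv, rfl⟩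
      rw [hIeq]
      exact hrev w v c d ((myWayBelow_le (hS₀wb w hw)).trans (hcd.trans (myWayBelow_le hv)))
        hcd (hS₀wb w hw) hv
    · rw [hIeq]
      constructor
      · rintro - ⟨w, hw, v, hv, rfl⟩
        show Icc c d ⊆ Icc w v
        exact Icc_subset_Icc (myWayBelow_le (hS₀wb w hw)) (myWayBelow_le hv)
      · intro u hu
        show u.carrier ⊆ Icc c d
        rw [myCarrier_eq]
        obtain ⟨v₀, hv₀⟩ := hVne
        obtain ⟨w₀, hw₀⟩ := hS₀ne
        refine Icc_subset_Icc ?_ ?_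
        · refine hS₀lub.2 fun w hw => ?_
          have h1 := hu (⟨w, hw, v₀, hv₀, rfl⟩ : _ ∈ S)
          exact (h1 (by rw [myCarrier_eq]; exact ⟨le_rfl, myLend_le_rend X u⟩)).1
        · refine hVglb.2 fun v hv => ?_
          have h1 := hu (⟨w₀, hw₀, v, hv, rfl⟩ : _ ∈ S)
          exact (h1 (by rw [myCarrier_eq]; exact ⟨myLend_le_rend X u, le_rfl⟩)).2
  refine ⟨hdcpo, hcontIX, ?_⟩
  intro a b c d hab hcd
  exact ⟨hfwd a b c d hab hcd, fun hh => hrev a b c d hab hcd hh.1 hh.2⟩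
end

section
/- For a globally hyperbolic poset X, the set of maximal elements of the interval domain IX with the relative Scott topology is homeomorphic to X with the interval topology. -/
variable (X : Type*) [PartialOrder X]

instance : TopologicalSpace (IntDom X) := scottTop (IntDom X)

/-!
The map `x ↦ [x,x]` is a bijection from `X` onto the maximal elements of `IX`. It is continuous
because `[x,x]` is the directed supremum of the intervals `[a,b]` with `a ≪ x ≪ b`: a Scott-open
set containing `[x,x]` contains such an `[a,b]`, hence every `[z,z]` with `a ≪ z ≪ b`. Its inverse
is continuous because `{I | a ≪ left I ∧ right I ≪ b}` is Scott open. That needs directed suprema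
in `IX` to be computed endpointwise, and this is where global hyperbolicity enters: closed
intervals are closed and compact in the interval topology, so bounded directed sets in `X` have
suprema.
-/

open Set Topology

section WayBelow

variable {P : Type*} [Preorder P] {a b c x y : P}

theorem wayBelow.le (h : wayBelow a x) : a ≤ x := by
  obtain ⟨z, hz, haz⟩ :=
    h {x} (singleton_nonempty x) (directedOn_singleton x) x isLUB_singleton le_rfl
  rwa [mem_singleton_iff.1 hz] at haz

theorem wayBelow.trans_le (h : wayBelow a x) (hxy : x ≤ y) : wayBelow a y :=
  fun S hne hS s hs hys => h S hne hS s hs (hxy.trans hys)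

theorem LE.le.trans_wayBelow (hab : a ≤ b) (h : wayBelow b x) : wayBelow a x :=
  fun S hne hS s hs hxs => (h S hne hS s hs hxs).imp fun _ ⟨hz, hbz⟩ => ⟨hz, hab.trans hbz⟩

theorem IsContinuousPoset.nonempty_directedOn_isLUB_wayBelow (hP : IsContinuousPoset P)
    (x : P) :
    {a | wayBelow a x}.Nonempty ∧ DirectedOn (· ≤ ·) {a | wayBelow a x} ∧
      IsLUB {a | wayBelow a x} x := by
  obtain ⟨S, -, hne, hS, hSx, hlub⟩ := hP x
  refine ⟨hne.mono hSx, fun a ha b hb => ?_, fun a ha => wayBelow.le ha,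
    fun u hu => hlub.2 fun a haS => hu (hSx a haS)⟩
  obtain ⟨c, hc, hac⟩ := ha S hne hS x hlub le_rfl
  obtain ⟨d, hd, hbd⟩ := hb S hne hS x hlub le_rfl
  obtain ⟨e, he, hce, hde⟩ := hS c hc d hd
  exact ⟨e, hSx e he, hac.trans hce, hbd.trans hde⟩

/-- Interpolation: `{z | ∃ w, z ≪ w ≪ c}` is directed with supremum `c`, so `a ≪ c` puts `a`
below one of its elements. -/
theorem IsContinuousPoset.exists_between (hP : IsContinuousPoset P) (h : wayBelow a c) :
    ∃ b, wayBelow a b ∧ wayBelow b c := by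
  have approx := hP.nonempty_directedOn_isLUB_wayBelow
  obtain ⟨⟨w₀, hw₀⟩, hdir, hlub⟩ := approx c
  let D := {z | ∃ w, wayBelow z w ∧ wayBelow w c}
  have hDne : D.Nonempty :=
    let ⟨z, hz⟩ := (approx w₀).1
    ⟨z, w₀, hz, hw₀⟩
  have hD : DirectedOn (· ≤ ·) D := by
    rintro z₁ ⟨w₁, hz₁, hw₁⟩ z₂ ⟨w₂, hz₂, hw₂⟩
    obtain ⟨w, hw, hw₁w, hw₂w⟩ := hdir w₁ hw₁ w₂ hw₂
    obtain ⟨z, hz, hz₁z, hz₂z⟩ := (approx w).2.1 z₁ (hz₁.trans_le hw₁w) z₂ (hz₂.trans_le hw₂w)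
    exact ⟨z, ⟨w, hz, hw⟩, hz₁z, hz₂z⟩
  have hDc : IsLUB D c :=
    ⟨fun _ ⟨_, hzw, hwc⟩ => hzw.le.trans hwc.le,
      fun u hu => hlub.2 fun w hw => (approx w).2.2.2 fun z hz => hu ⟨w, hz, hw⟩⟩
  obtain ⟨z, ⟨w, hzw, hwc⟩, haz⟩ := h D hDne hD c hDc le_rfl
  exact ⟨w, haz.trans_wayBelow hzw, hwc⟩

end WayBelow

section IntervalTopology

variable {P : Type*}

/-- The closed intervals `[t, v]`, with `t ∈ T` and `v` an upper bound of `T`, have the finite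
intersection property; a common point of all of them is the supremum of `T`. -/
theorem DirectedOn.exists_isLUB_of_bddAbove [Preorder P] [TopologicalSpace P]
    [ClosedIciTopology P] [ClosedIicTopology P] [CompactIccSpace P] {T : Set P}
    (hT : DirectedOn (· ≤ ·) T) (hne : T.Nonempty) (hbdd : BddAbove T) : ∃ c, IsLUB T c := by
  obtain ⟨t₀, ht₀⟩ := hne
  obtain ⟨v₀, hv₀⟩ := hbdd
  classical
  let i₀ : T × upperBounds T := (⟨t₀, ht₀⟩, ⟨v₀, hv₀⟩)
  have : Nonempty (T × upperBounds T) := ⟨i₀⟩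
  have hdir : Directed (· ≤ ·) fun i : T × upperBounds T => (i.1 : P) := fun i j => by
    obtain ⟨k, hk, hik, hjk⟩ := hT i.1 i.1.2 j.1 j.1.2
    exact ⟨(⟨k, hk⟩, i.2), hik, hjk⟩
  have hfin : ∀ u : Finset (T × upperBounds T),
      (Icc t₀ v₀ ∩ ⋂ i ∈ u, Icc (i.1 : P) i.2).Nonempty := fun u => by
    obtain ⟨k, hk⟩ := hdir.finset_le (insert i₀ u)
    exact ⟨k.1, ⟨hk i₀ (Finset.mem_insert_self _ _), hv₀ k.1.2⟩,
      mem_iInter₂.2 fun i hi => ⟨hk i (Finset.mem_insert_of_mem hi), i.2.2 k.1.2⟩⟩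
  have hclosed (i : T × upperBounds T) : IsClosed (Icc (i.1 : P) i.2) :=
    isClosed_Ici.inter isClosed_Iic
  obtain ⟨c, -, hc⟩ := isCompact_Icc.inter_iInter_nonempty _ hclosed hfin
  exact ⟨c, fun t ht => (mem_iInter.1 hc (⟨t, ht⟩, i₀.2)).1,
    fun v hv => (mem_iInter.1 hc (i₀.1, ⟨v, hv⟩)).2⟩

theorem DirectedOn.exists_isGLB_of_bddBelow [Preorder P] [TopologicalSpace P]
    [ClosedIciTopology P] [ClosedIicTopology P] [CompactIccSpace P] {T : Set P}
    (hT : DirectedOn (· ≥ ·) T) (hne : T.Nonempty) (hbdd : BddBelow T) : ∃ c, IsGLB T c :=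
  DirectedOn.exists_isLUB_of_bddAbove (P := Pᵒᵈ) hT hne hbdd

variable [Preorder P]

theorem isOpen_intervalTop_of_forall {U : Set P}
    (h : ∀ y ∈ U, ∃ a b, wayBelow a y ∧ wayBelow y b ∧ {z | wayBelow a z ∧ wayBelow z b} ⊆ U) :
    IsOpen[intervalTop P] U := by
  let _ := intervalTop P
  refine isOpen_iff_forall_mem_open.2 fun y hy => ?_
  obtain ⟨a, b, hay, hyb, hU⟩ := h y hy
  exact ⟨_, hU, TopologicalSpace.isOpen_generateFrom_of_mem ⟨a, b, rfl⟩, hay, hyb⟩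

theorem IsBicontinuous.closedIciTopology (hP : IsBicontinuous P) :
    @ClosedIciTopology P (intervalTop P) _ := by
  let _ := intervalTop P
  refine ⟨fun t => isOpen_compl_iff.1 (isOpen_intervalTop_of_forall fun y hy => ?_)⟩
  obtain ⟨b, hyb, htb⟩ : ∃ b, wayBelow y b ∧ ¬ t ≤ b := by
    by_contra! h
    exact hy ((hP.2.2 y).2.2.2 h)
  obtain ⟨a, hay⟩ := (hP.1.nonempty_directedOn_isLUB_wayBelow y).1
  exact ⟨a, b, hay, hyb, fun z hz htz => htb (le_trans htz hz.2.le)⟩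

theorem IsBicontinuous.closedIicTopology (hP : IsBicontinuous P) :
    @ClosedIicTopology P (intervalTop P) _ := by
  let _ := intervalTop P
  refine ⟨fun v => isOpen_compl_iff.1 (isOpen_intervalTop_of_forall fun y hy => ?_)⟩
  obtain ⟨a, hay, hav⟩ : ∃ a, wayBelow a y ∧ ¬ a ≤ v := by
    by_contra! h
    exact hy ((hP.1.nonempty_directedOn_isLUB_wayBelow y).2.2.2 h)
  obtain ⟨b, hyb⟩ := (hP.2.2 y).1
  exact ⟨a, b, hay, hyb, fun z hz hzv => hav (hz.1.le.trans hzv)⟩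

end IntervalTopology

section GloballyHyperbolic

variable {P : Type*} [PartialOrder P] {T : Set P}

theorem IsGloballyHyperbolic.exists_isLUB (hP : IsGloballyHyperbolic P)
    (hT : DirectedOn (· ≤ ·) T) (hne : T.Nonempty) (hbdd : BddAbove T) : ∃ c, IsLUB T c :=
  let _ := intervalTop P
  haveI := hP.1.closedIciTopology
  haveI := hP.1.closedIicTopology
  haveI : CompactIccSpace P := .mk' fun hab => hP.2 _ _ hab
  hT.exists_isLUB_of_bddAbove hne hbdd

theorem IsGloballyHyperbolic.exists_isGLB (hP : IsGloballyHyperbolic P)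
    (hT : DirectedOn (· ≥ ·) T) (hne : T.Nonempty) (hbdd : BddBelow T) : ∃ c, IsGLB T c :=
  let _ := intervalTop P
  haveI := hP.1.closedIciTopology
  haveI := hP.1.closedIicTopology
  haveI : CompactIccSpace P := .mk' fun hab => hP.2 _ _ hab
  hT.exists_isGLB_of_bddBelow hne hbdd

end GloballyHyperbolic

namespace IntDom

variable {X}

noncomputable def left (I : IntDom X) : X := I.isIcc.choose

noncomputable def right (I : IntDom X) : X := I.isIcc.choose_spec.choose

theorem left_le_right (I : IntDom X) : I.left ≤ I.right :=
  I.isIcc.choose_spec.choose_spec.1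

theorem carrier_eq_Icc (I : IntDom X) : I.carrier = Icc I.left I.right :=
  I.isIcc.choose_spec.choose_spec.2

theorem le_iff {I J : IntDom X} : I ≤ J ↔ I.left ≤ J.left ∧ J.right ≤ I.right := by
  change J.carrier ⊆ I.carrier ↔ _
  rw [J.carrier_eq_Icc, I.carrier_eq_Icc, Icc_subset_Icc_iff J.left_le_right]

theorem monotone_left : Monotone (left : IntDom X → X) := fun _ _ h => (le_iff.1 h).1

theorem antitone_right : Antitone (right : IntDom X → X) := fun _ _ h => (le_iff.1 h).2

theorem ext_left_right {I J : IntDom X} (hl : I.left = J.left) (hr : I.right = J.right) :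
    I = J :=
  le_antisymm (le_iff.2 ⟨hl.le, hr.ge⟩) (le_iff.2 ⟨hl.ge, hr.le⟩)

def ofLE {a b : X} (h : a ≤ b) : IntDom X := ⟨Icc a b, a, b, h, rfl⟩

@[simp]
theorem left_ofLE {a b : X} (h : a ≤ b) : (ofLE h).left = a :=
  ((Icc_eq_Icc_iff h).1 (ofLE h).carrier_eq_Icc).1.symm

@[simp]
theorem right_ofLE {a b : X} (h : a ≤ b) : (ofLE h).right = b :=
  ((Icc_eq_Icc_iff h).1 (ofLE h).carrier_eq_Icc).2.symm

theorem isMax_iff {I : IntDom X} : IsMax I ↔ I.left = I.right := by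
  refine ⟨fun hI => ?_, fun h J hIJ => ?_⟩
  · have hle : I ≤ ofLE (le_refl I.left) := le_iff.2 (by simpa using I.left_le_right)
    exact le_antisymm I.left_le_right (by simpa using (le_iff.1 (hI hle)).2)
  · obtain ⟨hl, hr⟩ := le_iff.1 hIJ
    exact le_iff.2 ⟨J.left_le_right.trans (hr.trans h.ge), h.ge.trans (hl.trans J.left_le_right)⟩

theorem _root_.DirectedOn.image_left {S : Set (IntDom X)} (hS : DirectedOn (· ≤ ·) S) :
    DirectedOn (· ≤ ·) (left '' S) :=
  hS.mono_comp fun _ _ h => monotone_left h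

theorem _root_.DirectedOn.image_right {S : Set (IntDom X)} (hS : DirectedOn (· ≤ ·) S) :
    DirectedOn (· ≥ ·) (right '' S) :=
  hS.mono_comp fun _ _ h => antitone_right h

/-- The endpoint suprema `c`, `d` exist by global hyperbolicity; `[c, d]` is then an upper bound
of `S`, so `s ≤ [c, d]`. -/
theorem isLUB_image_left_isGLB_image_right (hX : IsGloballyHyperbolic X)
    {S : Set (IntDom X)} (hne : S.Nonempty) (hS : DirectedOn (· ≤ ·) S) {s : IntDom X}
    (hs : IsLUB S s) : IsLUB (left '' S) s.left ∧ IsGLB (right '' S) s.right := by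
  have hsL : s.left ∈ upperBounds (left '' S) :=
    forall_mem_image.2 fun _ hJ => monotone_left (hs.1 hJ)
  have hsR : s.right ∈ lowerBounds (right '' S) :=
    forall_mem_image.2 fun _ hJ => antitone_right (hs.1 hJ)
  obtain ⟨c, hc⟩ := hX.exists_isLUB hS.image_left (hne.image _) ⟨s.left, hsL⟩
  obtain ⟨d, hd⟩ := hX.exists_isGLB hS.image_right (hne.image _) ⟨s.right, hsR⟩
  have hcs : c ≤ s.left := hc.2 hsL
  have hsd : s.right ≤ d := hd.2 hsR
  have hcd : c ≤ d := hcs.trans (s.left_le_right.trans hsd)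
  have hub : ofLE hcd ∈ upperBounds S := fun J hJ =>
    le_iff.2 ⟨by simpa using hc.1 (mem_image_of_mem _ hJ),
      by simpa using hd.1 (mem_image_of_mem _ hJ)⟩
  have hsc : s.left ≤ c ∧ d ≤ s.right := by simpa using le_iff.1 (hs.2 hub)
  exact ⟨le_antisymm hcs hsc.1 ▸ hc, le_antisymm hsc.2 hsd ▸ hd⟩

theorem isOpen_setOf_wayBelow_left_wayBelow_right (hX : IsGloballyHyperbolic X) (a b : X) :
    IsOpen {I : IntDom X | wayBelow a I.left ∧ wayBelow I.right b} := by
  refine ⟨fun I ⟨ha, hb⟩ J hIJ =>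
    ⟨ha.trans_le (le_iff.1 hIJ).1, (le_iff.1 hIJ).2.trans_wayBelow hb⟩, ?_⟩
  rintro S hne hS s hs ⟨ha, hb⟩
  obtain ⟨hL, hR⟩ := isLUB_image_left_isGLB_image_right hX hne hS hs
  obtain ⟨a', haa', ha's⟩ := hX.1.1.exists_between ha
  obtain ⟨b', hsb', hb'b⟩ := hX.1.1.exists_between hb
  obtain ⟨_, ⟨J₁, hJ₁, rfl⟩, ha'J₁⟩ := ha's _ (hne.image _) hS.image_left _ hL le_rfl
  -- the dual characterization of `≪` by filtered infima
  obtain ⟨_, ⟨J₂, hJ₂, rfl⟩, hJ₂b'⟩ :=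
    (hX.1.2.1 _ _).1 hsb' _ (hne.image _) hS.image_right _ hR le_rfl
  obtain ⟨K, hK, hJ₁K, hJ₂K⟩ := hS J₁ hJ₁ J₂ hJ₂
  exact ⟨K, hK, haa'.trans_le (ha'J₁.trans (monotone_left hJ₁K)),
    ((antitone_right hJ₂K).trans hJ₂b').trans_wayBelow hb'b⟩

theorem isLUB_setOf_wayBelow_left_wayBelow_right (hX : IsBicontinuous X) (x : X) :
    let S := {I : IntDom X | wayBelow I.left x ∧ wayBelow x I.right}
    S.Nonempty ∧ DirectedOn (· ≤ ·) S ∧ IsLUB S (ofLE (le_refl x)) := by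
  obtain ⟨⟨a₀, ha₀⟩, hdirL, hlubL⟩ := hX.1.nonempty_directedOn_isLUB_wayBelow x
  obtain ⟨⟨b₀, hb₀⟩, hdirR, hglbR⟩ := hX.2.2 x
  have hmem {a b : X} (ha : wayBelow a x) (hb : wayBelow x b) :
      wayBelow (ofLE (ha.le.trans hb.le)).left x ∧
        wayBelow x (ofLE (ha.le.trans hb.le)).right := by
    simpa using ⟨ha, hb⟩
  refine ⟨⟨_, hmem ha₀ hb₀⟩, ?_, fun I hI => le_iff.2 (by simpa using ⟨hI.1.le, hI.2.le⟩),
    fun u hu => ?_⟩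
  · rintro I₁ ⟨hI₁l, hI₁r⟩ I₂ ⟨hI₂l, hI₂r⟩
    obtain ⟨a, ha, h₁a, h₂a⟩ := hdirL _ hI₁l _ hI₂l
    obtain ⟨b, hb, h₁b, h₂b⟩ := hdirR _ hI₁r _ hI₂r
    exact ⟨_, hmem ha hb, le_iff.2 (by simpa using ⟨h₁a, h₁b⟩),
      le_iff.2 (by simpa using ⟨h₂a, h₂b⟩)⟩
  · have hxu : x ≤ u.left := hlubL.2 fun a ha => by simpa using (le_iff.1 (hu (hmem ha hb₀))).1
    have hux : u.right ≤ x := hglbR.2 fun b hb => by simpa using (le_iff.1 (hu (hmem ha₀ hb))).2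
    exact le_iff.2 (by simpa using ⟨hxu, hux⟩)

variable (X) in
noncomputable def maxEquiv : X ≃ {I : IntDom X // IsMax I} where
  toFun x := ⟨ofLE (le_refl x), isMax_iff.2 (by simp)⟩
  invFun I := I.1.left
  left_inv x := left_ofLE (le_refl x)
  right_inv I := Subtype.ext <|
    ext_left_right (left_ofLE le_rfl) ((right_ofLE le_rfl).trans (isMax_iff.1 I.2))

theorem continuous_maxEquiv (hX : IsBicontinuous X) :
    Continuous[intervalTop X, _] (maxEquiv X) := by
  let _ := intervalTop X
  refine .subtype_mk (continuous_def.2 fun W hW => isOpen_intervalTop_of_forall fun x hx => ?_) _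
  obtain ⟨hne, hS, hlub⟩ := isLUB_setOf_wayBelow_left_wayBelow_right hX x
  obtain ⟨I, ⟨hIx, hxI⟩, hIW⟩ := hW.2 _ hne hS _ hlub hx
  exact ⟨I.left, I.right, hIx, hxI, fun z hz =>
    hW.1 I hIW _ (le_iff.2 (by simpa using ⟨hz.1.le, hz.2.le⟩))⟩

theorem continuous_maxEquiv_symm (hX : IsGloballyHyperbolic X) :
    Continuous[_, intervalTop X] (maxEquiv X).symm := by
  refine continuous_generateFrom_iff.2 ?_
  rintro _ ⟨a, b, rfl⟩
  have hpre : (maxEquiv X).symm ⁻¹' {x | wayBelow a x ∧ wayBelow x b} =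
      Subtype.val ⁻¹' {I : IntDom X | wayBelow a I.left ∧ wayBelow I.right b} := by
    ext I
    change wayBelow a I.1.left ∧ wayBelow I.1.left b ↔ wayBelow a I.1.left ∧ wayBelow I.1.right b
    rw [isMax_iff.1 I.2]
  rw [hpre]
  exact (isOpen_setOf_wayBelow_left_wayBelow_right hX a b).preimage continuous_subtype_val

end IntDom

/-- For a globally hyperbolic poset `X`, the maximal elements of the interval
domain `IX` with the relative Scott topology are homeomorphic to `X` with the
interval topology, via `x ↦ [x,x]`. -/
theorem intDom_max_homeomorph (hX : IsGloballyHyperbolic X) :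
    ∃ h : @Homeomorph X {I : IntDom X // IsMax I} (intervalTop X) _,
      ∀ x : X, (h x).1.carrier = Set.Icc x x :=
  ⟨@Homeomorph.mk X _ (intervalTop X) _ (IntDom.maxEquiv X)
    (IntDom.continuous_maxEquiv hX.1) (IntDom.continuous_maxEquiv_symm hX), fun _ => rfl⟩
end

section
/- The nonempty finite subsets of a continuous dcpo D, together with the Egli-Milner relation ≪_EM, form an abstract basis. -/
/-- The Egli–Milner way-below relation on subsets of a dcpo. -/
def emWayBelow {D : Type*} [Preorder D] (A B : Set D) : Prop :=
  (∀ a ∈ A, ∃ b ∈ B, wayBelow a b) ∧ (∀ b ∈ B, ∃ a ∈ A, wayBelow a b)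

theorem DirectedOn.exists_mem_forall_le_of_finite {α : Type*} [Preorder α] {S A : Set α}
    (hS : DirectedOn (· ≤ ·) S) (hne : S.Nonempty) (hA : A.Finite)
    (h : ∀ a ∈ A, ∃ s ∈ S, a ≤ s) : ∃ s ∈ S, ∀ a ∈ A, a ≤ s := by
  have := hne.to_subtype
  have := hA.to_subtype
  choose g hgS hg using h
  obtain ⟨z, hz⟩ := (directedOn_iff_directed.1 hS).finite_le
    fun a : A => (⟨g a a.2, hgS a a.2⟩ : S)
  exact ⟨z, z.2, fun a ha => (hg a ha).trans (hz ⟨a, ha⟩)⟩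

namespace wayBelow

variable {P : Type*} [Preorder P] {a a' b b' c : P}

theorem le_s14 (h : wayBelow a b) : a ≤ b := by
  obtain ⟨z, rfl, haz⟩ := h {b} (Set.singleton_nonempty b) (directedOn_singleton b) b
    isLUB_singleton le_rfl
  exact haz

theorem mono (ha : a' ≤ a) (h : wayBelow a b) (hb : b ≤ b') : wayBelow a' b' := by
  intro S hne hdir s hs hb's
  obtain ⟨z, hz, haz⟩ := h S hne hdir s hs (hb.trans hb's)
  exact ⟨z, hz, ha.trans haz⟩

theorem trans (hab : wayBelow a b) (hbc : wayBelow b c) : wayBelow a c :=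
  hab.mono le_rfl hbc.le_s14

theorem exists_le_of_isLUB (h : wayBelow a b) {S : Set P} (hne : S.Nonempty)
    (hdir : DirectedOn (· ≤ ·) S) (hS : IsLUB S b) : ∃ s ∈ S, a ≤ s :=
  h S hne hdir b hS le_rfl

end wayBelow

namespace IsContinuousPoset

variable {P : Type*} [Preorder P]

theorem nonempty_wayBelow (hP : IsContinuousPoset P) (x : P) : {a | wayBelow a x}.Nonempty := by
  obtain ⟨S, -, hne, -, hSx, -⟩ := hP x
  exact hne.mono hSx

theorem directedOn_wayBelow (hP : IsContinuousPoset P) (x : P) :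
    DirectedOn (· ≤ ·) {a | wayBelow a x} := by
  obtain ⟨S, -, hne, hdir, hSx, hS⟩ := hP x
  intro a₁ ha₁ a₂ ha₂
  obtain ⟨s₁, hs₁, ha₁s₁⟩ := wayBelow.exists_le_of_isLUB ha₁ hne hdir hS
  obtain ⟨s₂, hs₂, ha₂s₂⟩ := wayBelow.exists_le_of_isLUB ha₂ hne hdir hS
  obtain ⟨s, hs, hs₁s, hs₂s⟩ := hdir s₁ hs₁ s₂ hs₂
  exact ⟨s, hSx s hs, ha₁s₁.trans hs₁s, ha₂s₂.trans hs₂s⟩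

theorem isLUB_wayBelow (hP : IsContinuousPoset P) (x : P) : IsLUB {a | wayBelow a x} x := by
  obtain ⟨S, -, -, -, hSx, hS⟩ := hP x
  exact ⟨fun _ ha => wayBelow.le_s14 ha, fun _ hu => hS.2 fun s hs => hu (hSx s hs)⟩

theorem nonempty_interpolants (hP : IsContinuousPoset P) (x : P) :
    {d | ∃ e, wayBelow d e ∧ wayBelow e x}.Nonempty := by
  obtain ⟨e, hex⟩ := hP.nonempty_wayBelow x
  obtain ⟨d, hde⟩ := hP.nonempty_wayBelow e
  exact ⟨d, e, hde, hex⟩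

theorem directedOn_interpolants (hP : IsContinuousPoset P) (x : P) :
    DirectedOn (· ≤ ·) {d | ∃ e, wayBelow d e ∧ wayBelow e x} := by
  rintro d₁ ⟨e₁, hd₁, he₁⟩ d₂ ⟨e₂, hd₂, he₂⟩
  obtain ⟨e, hex, he₁e, he₂e⟩ := hP.directedOn_wayBelow x e₁ he₁ e₂ he₂
  obtain ⟨d, hde, hd₁d, hd₂d⟩ :=
    hP.directedOn_wayBelow e d₁ (hd₁.mono le_rfl he₁e) d₂ (hd₂.mono le_rfl he₂e)
  exact ⟨d, ⟨e, hde, hex⟩, hd₁d, hd₂d⟩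

theorem isLUB_interpolants (hP : IsContinuousPoset P) (x : P) :
    IsLUB {d | ∃ e, wayBelow d e ∧ wayBelow e x} x := by
  refine ⟨fun d ⟨e, hde, hex⟩ => (hde.trans hex).le_s14, fun u hu => ?_⟩
  refine (hP.isLUB_wayBelow x).2 fun e hex => (hP.isLUB_wayBelow e).2 fun d hde => ?_
  exact hu ⟨e, hde, hex⟩

theorem exists_wayBelow_forall_wayBelow_of_finite (hP : IsContinuousPoset P) {A : Set P}
    (hA : A.Finite) {x : P} (h : ∀ a ∈ A, wayBelow a x) :
    ∃ y, wayBelow y x ∧ ∀ a ∈ A, wayBelow a y := by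
  obtain ⟨d, ⟨y, hdy, hyx⟩, hAd⟩ :=
    (hP.directedOn_interpolants x).exists_mem_forall_le_of_finite (hP.nonempty_interpolants x) hA
      fun a ha => (h a ha).exists_le_of_isLUB (hP.nonempty_interpolants x)
        (hP.directedOn_interpolants x) (hP.isLUB_interpolants x)
  exact ⟨y, hyx, fun a ha => hdy.mono (hAd a ha) le_rfl⟩

theorem exists_interpolating_map (hP : IsContinuousPoset P) {U : Set P} (hU : U.Finite) :
    ∃ f : P → P, ∀ x, wayBelow (f x) x ∧ ∀ a ∈ U, wayBelow a x → wayBelow a (f x) := by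
  choose f hfx hf using fun x =>
    hP.exists_wayBelow_forall_wayBelow_of_finite (hU.inter_of_left {a | wayBelow a x})
      fun _ ha => ha.2
  exact ⟨f, fun x => ⟨hfx x, fun a ha hax => hf x a ⟨ha, hax⟩⟩⟩

end IsContinuousPoset

namespace emWayBelow

variable {P : Type*} [Preorder P] {A B C : Set P}

theorem trans (hAB : emWayBelow A B) (hBC : emWayBelow B C) : emWayBelow A C := by
  constructor
  · intro a ha
    obtain ⟨b, hb, hab⟩ := hAB.1 a ha
    obtain ⟨c, hc, hbc⟩ := hBC.1 b hb
    exact ⟨c, hc, hab.trans hbc⟩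
  · intro c hc
    obtain ⟨b, hb, hbc⟩ := hBC.2 c hc
    obtain ⟨a, ha, hab⟩ := hAB.2 b hb
    exact ⟨a, ha, hab.trans hbc⟩

theorem image_right {f : P → P} (h : emWayBelow A B)
    (hf : ∀ a ∈ A, ∀ b, wayBelow a b → wayBelow a (f b)) : emWayBelow A (f '' B) := by
  constructor
  · intro a ha
    obtain ⟨b, hb, hab⟩ := h.1 a ha
    exact ⟨f b, Set.mem_image_of_mem f hb, hf a ha b hab⟩
  · rintro _ ⟨b, hb, rfl⟩
    obtain ⟨a, ha, hab⟩ := h.2 b hb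
    exact ⟨a, ha, hf a ha b hab⟩

end emWayBelow

theorem emWayBelow_image_self {P : Type*} [Preorder P] {f : P → P} (hf : ∀ x, wayBelow (f x) x)
    (B : Set P) : emWayBelow (f '' B) B :=
  ⟨fun _ ⟨b, hb, hfb⟩ => ⟨b, hb, hfb ▸ hf b⟩, fun b hb => ⟨f b, Set.mem_image_of_mem f hb, hf b⟩⟩

theorem finsets_emWayBelow_abstract_basis_general {D : Type*} [PartialOrder D]
    (hcont : IsContinuousPoset D) :
    (∀ F G H : {F : Set D // F.Finite ∧ F.Nonempty},
      emWayBelow F.1 G.1 → emWayBelow G.1 H.1 → emWayBelow F.1 H.1) ∧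
    (∀ M : Set {F : Set D // F.Finite ∧ F.Nonempty}, M.Finite →
      ∀ x : {F : Set D // F.Finite ∧ F.Nonempty},
        (∀ m ∈ M, emWayBelow m.1 x.1) →
        ∃ y : {F : Set D // F.Finite ∧ F.Nonempty},
          (∀ m ∈ M, emWayBelow m.1 y.1) ∧ emWayBelow y.1 x.1) := by
  refine ⟨fun _ _ _ => emWayBelow.trans, fun M hM X hMX => ?_⟩
  obtain ⟨f, hf⟩ := hcont.exists_interpolating_map (hM.biUnion fun m _ => m.2.1)
  refine ⟨⟨f '' X.1, X.2.1.image f, X.2.2.image f⟩, fun m hm => ?_,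
    emWayBelow_image_self (fun x => (hf x).1) X.1⟩
  exact (hMX m hm).image_right fun a ha b hab => (hf b).2 a (Set.mem_biUnion hm ha) hab

/-- The nonempty finite subsets of a continuous dcpo under the Egli–Milner
way-below relation form an abstract basis: the relation is transitive and
interpolative. -/
theorem finsets_emWayBelow_abstract_basis {D : Type*} [PartialOrder D]
    (hdcpo : IsDcpo D) (hcont : IsContinuousPoset D) :
    (∀ F G H : {F : Set D // F.Finite ∧ F.Nonempty},
      emWayBelow F.1 G.1 → emWayBelow G.1 H.1 → emWayBelow F.1 H.1) ∧
    (∀ M : Set {F : Set D // F.Finite ∧ F.Nonempty}, M.Finite →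
      ∀ x : {F : Set D // F.Finite ∧ F.Nonempty},
        (∀ m ∈ M, emWayBelow m.1 x.1) →
        ∃ y : {F : Set D // F.Finite ∧ F.Nonempty},
          (∀ m ∈ M, emWayBelow m.1 y.1) ∧ emWayBelow y.1 x.1) :=
  finsets_emWayBelow_abstract_basis_general hcont
end

section
/- Let D be an ω-continuous dcpo such that X = max(D) is metrizable (hence normal) in its relative Scott topology, and suppose each compact K ⊆ X corresponds to the ideal K* = {F finite ⊆ D : F ≪_EM K} in the convex powerdomain CD. If (k_i) is a sequence of nonempty compact connected subsets of X such that (k_i*) converges in the Scott topology of CD to k* for a compact set k, then k is connected. -/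
/-- An ideal of an abstract basis `(B, r)`. -/
def IsIdl {B : Type*} (r : B → B → Prop) (I : Set B) : Prop :=
  I.Nonempty ∧ (∀ x y : B, r x y → y ∈ I → x ∈ I) ∧
    ∀ x ∈ I, ∀ y ∈ I, ∃ z ∈ I, r x z ∧ r y z

variable (D : Type*) [PartialOrder D]

/-- Nonempty finite subsets of `D`, the carrier of the abstract basis of the
convex powerdomain. -/
def FinSub := {F : Set D // F.Finite ∧ F.Nonempty}

/-- Egli–Milner way-below on nonempty finite subsets. -/
def relEM : FinSub D → FinSub D → Prop := fun F G => emWayBelow F.1 G.1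

/-- The convex powerdomain: the ideal completion of the abstract basis of
nonempty finite subsets under the Egli–Milner way-below relation, ordered by
inclusion. -/
def ConvexPowerdomain := {I : Set (FinSub D) // IsIdl (relEM D) I}

instance : PartialOrder (ConvexPowerdomain D) where
  le I J := I.1 ⊆ J.1
  le_refl I := subset_rfl
  le_trans I J K h1 h2 := Set.Subset.trans h1 h2
  le_antisymm I J h1 h2 := Subtype.ext (subset_antisymm h1 h2)

/-- The maximal elements of `D`. -/
def MaxD := {d : D // IsMax d}

/-- The relative Scott topology on the maximal elements of `D`. -/
def relScott : TopologicalSpace (MaxD D) :=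
  TopologicalSpace.induced Subtype.val (scottTop D)

/-- `K* = {F finite | F ≪_EM K}` for a set `K` of maximal elements. -/
def kstar (K : Set (MaxD D)) : Set (FinSub D) :=
  {F | emWayBelow F.1 (Subtype.val '' K)}

section Aux

theorem wayBelow_le_s16 {P : Type*} [Preorder P] {a b : P} (h : wayBelow a b) : a ≤ b := by
  obtain ⟨z, hz, hle⟩ := h {b} ⟨b, rfl⟩
    (fun x hx y hy => ⟨b, rfl, hx.le, hy.le⟩) b isLUB_singleton le_rfl
  rwa [Set.mem_singleton_iff.mp hz] at hle

theorem wayBelow_mono_right {P : Type*} [Preorder P] {a b c : P}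
    (h : wayBelow a b) (hbc : b ≤ c) : wayBelow a c :=
  fun S hS hdir s hs hcs => h S hS hdir s hs (hbc.trans hcs)

theorem wayBelow_mono_left {P : Type*} [Preorder P] {a b c : P}
    (hab : a ≤ b) (h : wayBelow b c) : wayBelow a c :=
  fun S hS hdir s hs hcs =>
    (h S hS hdir s hs hcs).imp fun z hz => ⟨hz.1, hab.trans hz.2⟩

/-- Interpolation in a continuous poset. -/
theorem wayBelow_interp {P : Type*} [Preorder P] {B : Set P} (hB : IsDomainBasis B)
    {a x : P} (h : wayBelow a x) : ∃ b, wayBelow a b ∧ wayBelow b x := by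
  choose S hSB hSne hSdir hSwb hSlub using hB
  set T : Set P := {t | ∃ c ∈ S x, t ∈ S c} with hT
  have hTne : T.Nonempty := by
    obtain ⟨c, hc⟩ := hSne x
    obtain ⟨t, ht⟩ := hSne c
    exact ⟨t, c, hc, ht⟩
  have hTdir : DirectedOn (· ≤ ·) T := by
    rintro t1 ⟨c1, hc1, ht1⟩ t2 ⟨c2, hc2, ht2⟩
    obtain ⟨c3, hc3, h13, h23⟩ := hSdir x c1 hc1 c2 hc2
    have w1 : wayBelow t1 c3 := wayBelow_mono_right (hSwb c1 t1 ht1) h13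
    have w2 : wayBelow t2 c3 := wayBelow_mono_right (hSwb c2 t2 ht2) h23
    obtain ⟨u1, hu1, htu1⟩ := w1 (S c3) (hSne c3) (hSdir c3) c3 (hSlub c3) le_rfl
    obtain ⟨u2, hu2, htu2⟩ := w2 (S c3) (hSne c3) (hSdir c3) c3 (hSlub c3) le_rfl
    obtain ⟨u, hu, hu1u, hu2u⟩ := hSdir c3 u1 hu1 u2 hu2
    exact ⟨u, ⟨c3, hc3, hu⟩, htu1.trans hu1u, htu2.trans hu2u⟩
  have hTlub : IsLUB T x := by
    constructor
    · rintro t ⟨c, hc, ht⟩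
      exact ((hSlub c).1 ht).trans ((hSlub x).1 hc)
    · intro w hw
      refine (hSlub x).2 fun c hc => ?_
      exact (hSlub c).2 fun t ht => hw ⟨c, hc, ht⟩
  obtain ⟨t, ⟨c, hc, htc⟩, hat⟩ := h T hTne hTdir x hTlub le_rfl
  exact ⟨c, wayBelow_mono_left hat (hSwb c t htc), hSwb x c hc⟩

theorem scott_isOpen_iff {P : Type*} [Preorder P] (U : Set P) :
    @IsOpen P (scottTop P) U ↔ ((∀ x ∈ U, ∀ y, x ≤ y → y ∈ U) ∧
      ∀ S : Set P, S.Nonempty → DirectedOn (· ≤ ·) S → ∀ s : P, IsLUB S s → s ∈ U →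
        (S ∩ U).Nonempty) :=
  Iff.rfl

/-- In a continuous poset, `↟a` is Scott-open. -/
theorem isOpen_wayBelow {P : Type*} [Preorder P] {B : Set P} (hB : IsDomainBasis B)
    (a : P) : @IsOpen P (scottTop P) {x | wayBelow a x} := by
  rw [scott_isOpen_iff]
  constructor
  · exact fun x hx y hxy => wayBelow_mono_right hx hxy
  · intro S hS hdir s hs hmem
    obtain ⟨b, hab, hbs⟩ := wayBelow_interp hB hmem
    obtain ⟨z, hz, hbz⟩ := hbs S hS hdir s hs le_rfl
    exact ⟨z, hz, wayBelow_mono_right hab hbz⟩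

/-- Membership of a fixed basis element is Scott-open on the convex powerdomain. -/
theorem isOpen_memIdeal (D : Type*) [PartialOrder D] (F : FinSub D) :
    @IsOpen (ConvexPowerdomain D) (scottTop (ConvexPowerdomain D)) {J : ConvexPowerdomain D | F ∈ J.1} := by
  rw [scott_isOpen_iff]
  constructor
  · exact fun J hJ J' hJJ' => hJJ' hJ
  · intro S hS hdir s hs hmem
    set T : Set (FinSub D) := {G | ∃ J ∈ S, G ∈ J.1} with hTdef
    have hTidl : IsIdl (relEM D) T := by
      refine ⟨?_, ?_, ?_⟩
      · obtain ⟨J, hJ⟩ := hS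
        obtain ⟨G, hG⟩ := J.2.1
        exact ⟨G, J, hJ, hG⟩
      · rintro x y hr ⟨J, hJ, hy⟩
        exact ⟨J, hJ, J.2.2.1 x y hr hy⟩
      · rintro x ⟨J1, hJ1, hx⟩ y ⟨J2, hJ2, hy⟩
        obtain ⟨J3, hJ3, h13, h23⟩ := hdir J1 hJ1 J2 hJ2
        obtain ⟨z, hz, hxz, hyz⟩ := J3.2.2.2 x (h13 hx) y (h23 hy)
        exact ⟨z, ⟨J3, hJ3, hz⟩, hxz, hyz⟩
    have hub : (⟨T, hTidl⟩ : ConvexPowerdomain D) ∈ upperBounds S :=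
      fun J hJ G hG => ⟨J, hJ, hG⟩
    have hsub : s ≤ ⟨T, hTidl⟩ := hs.2 hub
    obtain ⟨J, hJ, hFJ⟩ := hsub hmem
    exact ⟨J, hJ, hFJ⟩

end Aux

/-- If a sequence of nonempty compact connected subsets `kᵢ` of `X = max D`
is such that `kᵢ*` converges in the Scott topology of the convex powerdomain
to `k*` for a nonempty compact `k`, then `k` is connected. -/
theorem limit_connected
    (hdcpo : IsDcpo D) (homega : ∃ B : Set D, B.Countable ∧ IsDomainBasis B)
    (hmet : @TopologicalSpace.MetrizableSpace (MaxD D) (relScott D))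
    (k : Set (MaxD D)) (hk : k.Nonempty) (hkc : @IsCompact (MaxD D) (relScott D) k)
    (ki : ℕ → Set (MaxD D))
    (hki : ∀ i, (ki i).Nonempty ∧ @IsCompact (MaxD D) (relScott D) (ki i) ∧
      @IsConnected (MaxD D) (relScott D) (ki i))
    (hIi : ∀ i, IsIdl (relEM D) (kstar D (ki i)))
    (hIk : IsIdl (relEM D) (kstar D k))
    (hconv : Filter.Tendsto (fun i => (⟨kstar D (ki i), hIi i⟩ : ConvexPowerdomain D))
      Filter.atTop
      (@nhds (ConvexPowerdomain D) (scottTop (ConvexPowerdomain D))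
        ⟨kstar D k, hIk⟩)) :
    @IsConnected (MaxD D) (relScott D) k := by
  classical
  letI : TopologicalSpace D := scottTop D
  letI : TopologicalSpace (MaxD D) := relScott D
  letI : TopologicalSpace.MetrizableSpace (MaxD D) := hmet
  obtain ⟨B, -, hB⟩ := homega
  -- convergence gives: every F way-below k is eventually way-below ki
  have key : ∀ F ∈ kstar D k, ∀ᶠ i in Filter.atTop, F ∈ kstar D (ki i) := by
    intro F hF
    letI : TopologicalSpace (ConvexPowerdomain D) := scottTop (ConvexPowerdomain D)
    exact hconv ((isOpen_memIdeal D F).mem_nhds hF)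
  refine ⟨hk, ?_⟩
  by_contra hpc
  unfold IsPreconnected at hpc
  push_neg at hpc
  obtain ⟨U, V, hU, hV, hkUV, hkU, hkV, hempty⟩ := hpc
  -- k ∩ U and k ∩ V are disjoint compact sets
  have hkUeq : k ∩ U = k \ V := by
    apply Set.Subset.antisymm
    · rintro x ⟨hxk, hxU⟩
      refine ⟨hxk, fun hxV => ?_⟩
      have : x ∈ k ∩ (U ∩ V) := ⟨hxk, hxU, hxV⟩
      rw [hempty] at this; exact this
    · rintro x ⟨hxk, hxV⟩
      rcases hkUV hxk with h | h
      · exact ⟨hxk, h⟩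
      · exact absurd h hxV
  have hkVeq : k ∩ V = k \ U := by
    apply Set.Subset.antisymm
    · rintro x ⟨hxk, hxV⟩
      refine ⟨hxk, fun hxU => ?_⟩
      have : x ∈ k ∩ (U ∩ V) := ⟨hxk, hxU, hxV⟩
      rw [hempty] at this; exact this
    · rintro x ⟨hxk, hxU⟩
      rcases hkUV hxk with h | h
      · exact absurd h hxU
      · exact ⟨hxk, h⟩
  have hcompU : IsCompact (k ∩ U) := by rw [hkUeq]; exact hkc.diff hV
  have hcompV : IsCompact (k ∩ V) := by rw [hkVeq]; exact hkc.diff hU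
  have hdisjkUV : Disjoint (k ∩ U) (k ∩ V) := by
    rw [Set.disjoint_left]
    rintro x ⟨hxk, hxU⟩ ⟨-, hxV⟩
    have : x ∈ k ∩ (U ∩ V) := ⟨hxk, hxU, hxV⟩
    rw [hempty] at this; exact this
  -- separate them by disjoint open sets
  obtain ⟨U₀, V₀, hU₀, hV₀, hsubU, hsubV, hdisj⟩ :=
    SeparatedNhds.of_isCompact_isCompact hcompU hcompV hdisjkUV
  have hkcov : k ⊆ U₀ ∪ V₀ := by
    intro x hx
    rcases hkUV hx with h | h
    · exact Or.inl (hsubU ⟨hx, h⟩)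
    · exact Or.inr (hsubV ⟨hx, h⟩)
  -- pull the open sets back to Scott-opens of D
  obtain ⟨U', hU'o, hU'eq⟩ := isOpen_induced_iff.mp hU₀
  obtain ⟨V', hV'o, hV'eq⟩ := isOpen_induced_iff.mp hV₀
  -- pick approximants in the appropriate sectors
  have hpick : ∀ x : MaxD D,
      ∃ a : D, x ∈ U₀ ∪ V₀ → wayBelow a x.val ∧ ((x ∈ U₀ ∧ a ∈ U') ∨ (x ∈ V₀ ∧ a ∈ V')) := by
    intro x
    by_cases hx : x ∈ U₀ ∪ V₀
    swap
    · exact ⟨x.val, fun h => absurd h hx⟩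
    rcases hx with hx | hx
    · have hxU' : x.val ∈ U' := by rw [← hU'eq] at hx; exact hx
      obtain ⟨S, -, hSne, hSdir, hSwb, hSlub⟩ := hB x.val
      obtain ⟨a, haS, haU⟩ :=
        ((scott_isOpen_iff U').mp hU'o).2 S hSne hSdir x.val hSlub hxU'
      exact ⟨a, fun _ => ⟨hSwb a haS, Or.inl ⟨hx, haU⟩⟩⟩
    · have hxV' : x.val ∈ V' := by rw [← hV'eq] at hx; exact hx
      obtain ⟨S, -, hSne, hSdir, hSwb, hSlub⟩ := hB x.val
      obtain ⟨a, haS, haV⟩ :=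
        ((scott_isOpen_iff V').mp hV'o).2 S hSne hSdir x.val hSlub hxV'
      exact ⟨a, fun _ => ⟨hSwb a haS, Or.inr ⟨hx, haV⟩⟩⟩
  choose a hall using hpick
  have hawb : ∀ x : MaxD D, x ∈ U₀ ∪ V₀ → wayBelow (a x) x.val := fun x hx => (hall x hx).1
  have hasec : ∀ x : MaxD D, x ∈ U₀ ∪ V₀ → ((x ∈ U₀ ∧ a x ∈ U') ∨ (x ∈ V₀ ∧ a x ∈ V')) :=
    fun x hx => (hall x hx).2
  -- open cover of k by the way-above sets of the approximants
  set C : k → Set (MaxD D) := fun p =>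
    Subtype.val ⁻¹' {d | wayBelow (a p.1) d} with hC
  have hCopen : ∀ p : k, IsOpen (C p) :=
    fun p => isOpen_induced_iff.mpr ⟨_, isOpen_wayBelow hB (a p.1), rfl⟩
  have hCcov : k ⊆ ⋃ p : k, C p := by
    intro y hy
    exact Set.mem_iUnion.mpr ⟨⟨y, hy⟩, hawb y (hkcov hy)⟩
  obtain ⟨t, hcov⟩ := hkc.elim_finite_subcover C hCopen hCcov
  -- add witnesses from U₀ and V₀
  obtain ⟨xU, hxUk, hxUU⟩ := hkU
  obtain ⟨xV, hxVk, hxVV⟩ := hkV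
  have hxU0 : xU ∈ U₀ := hsubU ⟨hxUk, hxUU⟩
  have hxV0 : xV ∈ V₀ := hsubV ⟨hxVk, hxVV⟩
  set pU : k := ⟨xU, hxUk⟩
  set pV : k := ⟨xV, hxVk⟩
  set t' : Finset k := insert pU (insert pV t) with ht'
  -- the finite approximating set
  set F : FinSub D := ⟨(fun p : k => a p.1) '' ↑t',
    t'.finite_toSet.image _,
    ⟨a xU, pU, Finset.mem_insert_self _ _, rfl⟩⟩ with hF
  have hsector : ∀ p : k, (p.1 ∈ U₀ ∧ a p.1 ∈ U') ∨ (p.1 ∈ V₀ ∧ a p.1 ∈ V') :=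
    fun p => hasec p.1 (hkcov p.2)
  -- F is way below k
  have hFk : F ∈ kstar D k := by
    constructor
    · rintro b ⟨p, -, rfl⟩
      exact ⟨p.1.val, ⟨p.1, p.2, rfl⟩, hawb p.1 (hkcov p.2)⟩
    · rintro c ⟨y, hy, rfl⟩
      have : y ∈ ⋃ p ∈ t, C p := hcov hy
      obtain ⟨p, hp, hyp⟩ := Set.mem_iUnion₂.mp this
      exact ⟨a p.1, ⟨p, by simp [ht', hp], rfl⟩, hyp⟩
  obtain ⟨i, hFi⟩ := (key F hFk).exists
  obtain ⟨hkine, -, -, hkipre⟩ := hki i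
  -- ki i is contained in U₀ ∪ V₀
  have hupU : ∀ b ∈ U', ∀ d, b ≤ d → d ∈ U' := ((scott_isOpen_iff U').mp hU'o).1
  have hupV : ∀ b ∈ V', ∀ d, b ≤ d → d ∈ V' := ((scott_isOpen_iff V').mp hV'o).1
  have hkisub : ki i ⊆ U₀ ∪ V₀ := by
    intro y hy
    obtain ⟨b, ⟨p, -, rfl⟩, hwb⟩ := hFi.2 y.val ⟨y, hy, rfl⟩
    have hle : a p.1 ≤ y.val := wayBelow_le_s16 hwb
    rcases hsector p with ⟨-, hbU⟩ | ⟨-, hbV⟩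
    · left; rw [← hU'eq]; exact hupU _ hbU _ hle
    · right; rw [← hV'eq]; exact hupV _ hbV _ hle
  -- ki i meets U₀
  have haU' : a xU ∈ U' := by
    rcases hsector pU with ⟨-, h⟩ | ⟨hmem, -⟩
    · exact h
    · exact absurd hxU0 (Set.disjoint_right.mp hdisj hmem)
  have haV' : a xV ∈ V' := by
    rcases hsector pV with ⟨hmem, -⟩ | ⟨-, h⟩
    · exact absurd hxV0 (Set.disjoint_left.mp hdisj hmem)
    · exact h
  have hkiU : (ki i ∩ U₀).Nonempty := by
    obtain ⟨c, ⟨y, hy, rfl⟩, hwb⟩ :=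
      hFi.1 (a xU) ⟨pU, Finset.mem_coe.mpr (Finset.mem_insert_self _ _), rfl⟩
    refine ⟨y, hy, ?_⟩
    rw [← hU'eq]
    exact hupU _ haU' _ (wayBelow_le_s16 hwb)
  have hkiV : (ki i ∩ V₀).Nonempty := by
    obtain ⟨c, ⟨y, hy, rfl⟩, hwb⟩ :=
      hFi.1 (a xV) ⟨pV, by simp [ht'], rfl⟩
    refine ⟨y, hy, ?_⟩
    rw [← hV'eq]
    exact hupV _ haV' _ (wayBelow_le_s16 hwb)
  -- contradiction with connectedness of ki i
  obtain ⟨y, -, hyU, hyV⟩ := hkipre U₀ V₀ hU₀ hV₀ hkisub hkiU hkiV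
  exact Set.disjoint_left.mp hdisj hyU hyV
end
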